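/- arXiv:1901.06976 — 8 statements merged into one kernel-verified Lean document; each statement's English description precedes it below -/
import Mathlib

section
/- Let d, n ≥ 1, let X ⊆ ℝ^d be a nonempty compact set, and let Σ ∈ ℝ^{d×d} be symmetric positive definite. Then every measurable sample average rule δ_SA (i.e., every measurable decision rule with δ_SA(ξ^1,…,ξ^n) ∈ argmin_{x∈X} ξ̄^T x for all data) is admissible within the class of all measurable decision rules: there is no measurable decision rule δ' : (ℝ^d)^n → X with R(μ, δ') ≤ R(μ, δ_SA) for all μ ∈ ℝ^d and R(μ̂, δ') < R(μ̂, δ_SA) for some μ̂ ∈ ℝ^d. -/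
open MeasureTheory Matrix Real
open scoped RealInnerProductSpace
set_option maxHeartbeats 1000000


lemma aux_lin_le_exp (a : ℝ) (ha : 0 < a) (x : ℝ) (hx : 0 ≤ x) :
    x ≤ (2 * Real.sqrt a)⁻¹ * rexp (a * x ^ 2) := by
  have hs : 0 < Real.sqrt a := Real.sqrt_pos.2 ha
  have h1 : 2 * Real.sqrt a * x ≤ 1 + a * x ^ 2 := by
    nlinarith [sq_nonneg (Real.sqrt a * x - 1), Real.sq_sqrt ha.le]
  have h2 : (1 : ℝ) + a * x ^ 2 ≤ rexp (a * x ^ 2) := by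
    have := Real.add_one_le_exp (a * x ^ 2); linarith
  rw [inv_mul_eq_div, le_div_iff₀ (by positivity)]
  nlinarith

lemma aux_integrable_gauss (d : ℕ) (b : ℝ) (hb : 0 < b) :
    Integrable (fun v : EuclideanSpace ℝ (Fin d) => rexp (-b * ‖v‖ ^ 2)) := by
  have h := (GaussianFourier.integrable_cexp_neg_mul_sq_norm_add (V := EuclideanSpace ℝ (Fin d))
    (b := (b : ℂ)) (by simpa using hb) 0 0).norm
  refine h.congr ?_
  filter_upwards with v
  simp [Complex.norm_exp]
  left; norm_cast

lemma aux_integrable_norm_gauss (d : ℕ) (b : ℝ) (hb : 0 < b) :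
    Integrable (fun v : EuclideanSpace ℝ (Fin d) => ‖v‖ * rexp (-b * ‖v‖ ^ 2)) := by
  have hb2 : 0 < b / 2 := by positivity
  refine (((aux_integrable_gauss d (b/2) hb2).const_mul ((2 * Real.sqrt (b/2))⁻¹)).mono'
    ?_ ?_)
  · exact (continuous_norm.mul (by continuity)).aestronglyMeasurable
  · filter_upwards with v
    have h1 := aux_lin_le_exp (b/2) hb2 ‖v‖ (norm_nonneg v)
    have he : 0 < rexp (-b * ‖v‖ ^ 2) := Real.exp_pos _
    have : ‖v‖ * rexp (-b * ‖v‖ ^ 2) ≤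
        (2 * Real.sqrt (b/2))⁻¹ * rexp (b/2 * ‖v‖ ^ 2) * rexp (-b * ‖v‖ ^ 2) := by
      exact mul_le_mul_of_nonneg_right h1 he.le
    rw [Real.norm_eq_abs, abs_of_nonneg (by positivity)]
    calc ‖v‖ * rexp (-b * ‖v‖ ^ 2) ≤ _ := this
      _ = (2 * Real.sqrt (b/2))⁻¹ * rexp (-(b/2) * ‖v‖ ^ 2) := by
          rw [mul_assoc, ← Real.exp_add]; ring_nf

lemma aux_Q_continuous (d : ℕ) (M : Matrix (Fin d) (Fin d) ℝ) :
    Continuous (fun v : EuclideanSpace ℝ (Fin d) =>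
      (fun i => v i) ⬝ᵥ M.mulVec (fun i => v i)) := by
  simp only [dotProduct, Matrix.mulVec, dotProduct]
  have hcoord : ∀ i, Continuous (fun v : EuclideanSpace ℝ (Fin d) => v i) :=
    fun i => (EuclideanSpace.proj (𝕜 := ℝ) i).continuous
  exact continuous_finset_sum _ fun i _ => (hcoord i).mul
    (continuous_finset_sum _ fun j _ => (continuous_const.mul (hcoord j)))

lemma aux_Q_smul (d : ℕ) (M : Matrix (Fin d) (Fin d) ℝ) (r : ℝ) (v : Fin d → ℝ) :
    (r • v) ⬝ᵥ M.mulVec (r • v) = r ^ 2 * (v ⬝ᵥ M.mulVec v) := by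
  rw [Matrix.mulVec_smul, dotProduct_smul, smul_dotProduct]
  simp [smul_eq_mul]; ring

lemma aux_posdef_lb (d : ℕ) (hd : 1 ≤ d) (M : Matrix (Fin d) (Fin d) ℝ) (hM : M.PosDef) :
    ∃ c : ℝ, 0 < c ∧ ∀ v : EuclideanSpace ℝ (Fin d),
      c * ‖v‖ ^ 2 ≤ (fun i => v i) ⬝ᵥ M.mulVec (fun i => v i) := by
  set f : EuclideanSpace ℝ (Fin d) → ℝ :=
    fun v => (fun i => v i) ⬝ᵥ M.mulVec (fun i => v i) with hf
  have hfc : Continuous f := aux_Q_continuous d M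
  have hsph : (Metric.sphere (0 : EuclideanSpace ℝ (Fin d)) 1).Nonempty := by
    refine ⟨EuclideanSpace.single ⟨0, hd⟩ (1 : ℝ), ?_⟩
    simp [EuclideanSpace.norm_single]
  obtain ⟨v₀, hv₀mem, hv₀min⟩ :=
    (isCompact_sphere (0 : EuclideanSpace ℝ (Fin d)) 1).exists_isMinOn hsph
      hfc.continuousOn
  have hv₀norm : ‖v₀‖ = 1 := by simpa using hv₀mem
  have hv₀ne : v₀ ≠ 0 := by intro h; rw [h] at hv₀norm; simp at hv₀norm
  have hpos : 0 < f v₀ := by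
    have := hM.dotProduct_mulVec_pos (x := fun i => v₀ i) ?_
    · simpa [hf] using this
    · intro h
      apply hv₀ne
      ext i
      exact congrFun h i
  refine ⟨f v₀, hpos, fun v => ?_⟩
  rcases eq_or_ne v 0 with rfl | hv
  · simp [hf, Matrix.mulVec_zero]
  · have hnv : (0:ℝ) < ‖v‖ := norm_pos_iff.2 hv
    set u : EuclideanSpace ℝ (Fin d) := ‖v‖⁻¹ • v with hu
    have humem : u ∈ Metric.sphere (0 : EuclideanSpace ℝ (Fin d)) 1 := by
      simp [hu, norm_smul, abs_of_pos (inv_pos.2 hnv), inv_mul_cancel₀ hnv.ne']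
    have hfu : f v₀ ≤ f u := hv₀min humem
    have hscale : f u = ‖v‖⁻¹ ^ 2 * f v := by
      have : (fun i => u i) = (‖v‖⁻¹ • fun i => v i) := by
        ext i; simp [hu]
      rw [hf]; simp only [this]
      exact aux_Q_smul d M _ _
    have := mul_le_mul_of_nonneg_left hfu (le_of_lt (by positivity : (0:ℝ) < ‖v‖ ^ 2))
    calc f v₀ * ‖v‖ ^ 2 = ‖v‖ ^ 2 * f v₀ := by ring
      _ ≤ ‖v‖ ^ 2 * f u := this
      _ = f v := by rw [hscale]; field_simp

lemma aux_B_symm (d : ℕ) (M : Matrix (Fin d) (Fin d) ℝ) (hM : ∀ i j, M i j = M j i)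
    (u v : Fin d → ℝ) : u ⬝ᵥ M.mulVec v = v ⬝ᵥ M.mulVec u := by
  simp only [dotProduct, Matrix.mulVec, dotProduct, Finset.mul_sum]
  rw [Finset.sum_comm]
  refine Finset.sum_congr rfl fun i _ => Finset.sum_congr rfl fun j _ => ?_
  rw [hM j i]; ring

lemma aux_Q_sub (d : ℕ) (M : Matrix (Fin d) (Fin d) ℝ) (hM : ∀ i j, M i j = M j i)
    (x y : Fin d → ℝ) :
    (x - y) ⬝ᵥ M.mulVec (x - y)
      = x ⬝ᵥ M.mulVec x - 2 * (x ⬝ᵥ M.mulVec y) + y ⬝ᵥ M.mulVec y := by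
  have hsymm := aux_B_symm d M hM y x
  simp only [Matrix.mulVec_sub, sub_dotProduct, dotProduct_sub]
  linarith

lemma aux_key_identity (d n : ℕ) (M : Matrix (Fin d) (Fin d) ℝ)
    (hM : ∀ i j, M i j = M j i) (ξ : Fin n → (Fin d → ℝ)) (μ : Fin d → ℝ) :
    (∑ i, (ξ i - μ) ⬝ᵥ M.mulVec (ξ i - μ)) + μ ⬝ᵥ M.mulVec μ
      = ((n : ℝ) + 1) * ((μ - ((n : ℝ)+1)⁻¹ • ∑ i, ξ i) ⬝ᵥ
            M.mulVec (μ - ((n : ℝ)+1)⁻¹ • ∑ i, ξ i))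
        + ((∑ i, (ξ i) ⬝ᵥ M.mulVec (ξ i))
            - ((n : ℝ) + 1) * ((((n : ℝ)+1)⁻¹ • ∑ i, ξ i) ⬝ᵥ
                M.mulVec (((n : ℝ)+1)⁻¹ • ∑ i, ξ i))) := by
  have hne : ((n : ℝ) + 1) ≠ 0 := by positivity
  set s : Fin d → ℝ := ∑ i, ξ i with hs
  set a : Fin d → ℝ := ((n : ℝ)+1)⁻¹ • s with ha
  have hQa : a ⬝ᵥ M.mulVec a = (((n : ℝ)+1)⁻¹)^2 * (s ⬝ᵥ M.mulVec s) := by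
    rw [ha, Matrix.mulVec_smul, dotProduct_smul, smul_dotProduct,
      smul_eq_mul, smul_eq_mul]
    ring
  have hBμa : μ ⬝ᵥ M.mulVec a = ((n : ℝ)+1)⁻¹ * (μ ⬝ᵥ M.mulVec s) := by
    rw [ha, Matrix.mulVec_smul, dotProduct_smul, smul_eq_mul]
  have hBμs : μ ⬝ᵥ M.mulVec s = ∑ i, (ξ i) ⬝ᵥ M.mulVec μ := by
    rw [aux_B_symm d M hM μ s, hs]
    simp only [dotProduct, Finset.sum_apply, Finset.sum_mul]
    exact Finset.sum_comm
  have hexp : ∀ i, (ξ i - μ) ⬝ᵥ M.mulVec (ξ i - μ)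
      = (ξ i) ⬝ᵥ M.mulVec (ξ i) - 2 * ((ξ i) ⬝ᵥ M.mulVec μ) + μ ⬝ᵥ M.mulVec μ :=
    fun i => aux_Q_sub d M hM (ξ i) μ
  have hsum : (∑ i, (ξ i - μ) ⬝ᵥ M.mulVec (ξ i - μ))
      = (∑ i, (ξ i) ⬝ᵥ M.mulVec (ξ i)) - 2 * (∑ i, (ξ i) ⬝ᵥ M.mulVec μ)
        + (n : ℝ) * (μ ⬝ᵥ M.mulVec μ) := by
    simp only [hexp]
    rw [Finset.sum_add_distrib, Finset.sum_sub_distrib, Finset.sum_const, Finset.card_univ]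
    simp [Finset.mul_sum, nsmul_eq_mul]
  have hQsub : (μ - a) ⬝ᵥ M.mulVec (μ - a)
      = μ ⬝ᵥ M.mulVec μ - 2 * (μ ⬝ᵥ M.mulVec a) + a ⬝ᵥ M.mulVec a :=
    aux_Q_sub d M hM μ a
  rw [hsum, hQsub, hQa, hBμa, hBμs]
  have ht : ((n : ℝ) + 1) * ((n : ℝ)+1)⁻¹ = 1 := mul_inv_cancel₀ hne
  linear_combination (2 * (∑ i, (ξ i) ⬝ᵥ M.mulVec μ)) * ht


section MainAux

variable {d : ℕ}

local notation "E" => EuclideanSpace ℝ (Fin d)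

/-- ‖a‖² ≤ 2‖a-b‖² + 2‖b‖² -/
lemma aux_sq_split (a b : E) : ‖a‖ ^ 2 ≤ 2 * ‖a - b‖ ^ 2 + 2 * ‖b‖ ^ 2 := by
  have h : ‖a‖ ≤ ‖a - b‖ + ‖b‖ := by
    calc ‖a‖ = ‖a - b + b‖ := by rw [sub_add_cancel]
      _ ≤ ‖a - b‖ + ‖b‖ := norm_add_le _ _
  have h2 : ‖a‖ ^ 2 ≤ (‖a - b‖ + ‖b‖) ^ 2 := by
    apply pow_le_pow_left₀ (norm_nonneg a) h
  nlinarith [h2, sq_nonneg (‖a - b‖ - ‖b‖)]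

end MainAux

/-- Admissibility of the sample average rule for linear objectives over a
nonempty compact set, with Gaussian data of unknown mean and fixed covariance. -/
theorem sample_average_admissible_linear
    (d n : ℕ) (hd : 1 ≤ d) (hn : 1 ≤ n)
    (X : Set (EuclideanSpace ℝ (Fin d))) (hXne : X.Nonempty) (hXcompact : IsCompact X)
    (S : Matrix (Fin d) (Fin d) ℝ) (hS : S.PosDef)
    -- the Gaussian density φ_{μ,S}
    (φ : EuclideanSpace ℝ (Fin d) → EuclideanSpace ℝ (Fin d) → ℝ)
    (hφ : ∀ μ y, φ μ y =
      (2 * π) ^ (-(d : ℝ) / 2) * S.det ^ (-(1 : ℝ) / 2) *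
        exp (-((fun i => y i - μ i) ⬝ᵥ S⁻¹.mulVec (fun i => y i - μ i)) / 2))
    -- the loss L(μ, x) = μᵀx − min_{x'∈X} μᵀx'
    (L : EuclideanSpace ℝ (Fin d) → EuclideanSpace ℝ (Fin d) → ℝ)
    (hL : ∀ μ x, L μ x = ⟪μ, x⟫ - sInf ((fun x' => ⟪μ, x'⟫) '' X))
    -- the risk R(μ, δ) = ∫ L(μ, δ(ξ)) ∏ᵢ φ_{μ,S}(ξⁱ) dξ
    (risk : EuclideanSpace ℝ (Fin d) →
      ((Fin n → EuclideanSpace ℝ (Fin d)) → EuclideanSpace ℝ (Fin d)) → ℝ)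
    (hrisk : ∀ μ δ, risk μ δ =
      ∫ ξ : Fin n → EuclideanSpace ℝ (Fin d), L μ (δ ξ) * ∏ i, φ μ (ξ i))
    -- δSA is any measurable sample average rule: δSA(ξ) ∈ argmin_{x ∈ X} ξ̄ᵀ x
    (δSA : (Fin n → EuclideanSpace ℝ (Fin d)) → EuclideanSpace ℝ (Fin d))
    (hmeas : Measurable δSA)
    (hSA : ∀ ξ, δSA ξ ∈ X ∧
      ∀ x ∈ X, ⟪(n : ℝ)⁻¹ • ∑ i, ξ i, δSA ξ⟫ ≤ ⟪(n : ℝ)⁻¹ • ∑ i, ξ i, x⟫) :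
    -- δSA is admissible among all measurable decision rules into X
    ¬ ∃ δ' : (Fin n → EuclideanSpace ℝ (Fin d)) → EuclideanSpace ℝ (Fin d),
      Measurable δ' ∧ (∀ ξ, δ' ξ ∈ X) ∧
      (∀ μ, risk μ δ' ≤ risk μ δSA) ∧ ∃ μhat, risk μhat δ' < risk μhat δSA := by
  classical
  rintro ⟨δ', hδ'm, hδ'X, hle, μ₀, hlt⟩
  -- ## notation
  -- ## basic constants
  obtain ⟨R, hRX⟩ : ∃ R, ∀ x ∈ X, ‖x‖ ≤ R := hXcompact.isBounded.exists_norm_le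
  have hR0 : 0 ≤ R := le_trans (norm_nonneg _) (hRX _ hXne.choose_spec)
  set K : ℝ := (2 * π) ^ (-(d : ℝ) / 2) * S.det ^ (-(1 : ℝ) / 2) with hKdef
  have hK : 0 < K := mul_pos
    (Real.rpow_pos_of_pos (by positivity) _) (Real.rpow_pos_of_pos hS.det_pos _)
  set M : Matrix (Fin d) (Fin d) ℝ := S⁻¹ with hMdef
  have hMsym : ∀ i j, M i j = M j i := by
    intro i j
    have h := congrFun (congrFun hS.inv.isHermitian i) j
    simpa [Matrix.conjTranspose_apply] using h.symm
  obtain ⟨c₀, hc₀, hQlb⟩ := aux_posdef_lb d hd M hS.inv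
  set Q : (Fin d → ℝ) → ℝ := fun v => v ⬝ᵥ M.mulVec v with hQdef
  -- the density rewritten
  have hφ' : ∀ μ y : EuclideanSpace ℝ (Fin d), φ μ y = K * rexp (-(Q (fun i => y i - μ i)) / 2) := by
    intro μ y; rw [hφ]
  have hφpos : ∀ μ y : EuclideanSpace ℝ (Fin d), 0 < φ μ y := by
    intro μ y; rw [hφ']; positivity
  have hQarg : ∀ μ y : EuclideanSpace ℝ (Fin d), Q (fun i => y i - μ i) = Q (fun i => (y - μ) i) := fun μ y => rfl
  have hφle : ∀ μ y : EuclideanSpace ℝ (Fin d), φ μ y ≤ K * rexp (-(c₀ / 2) * ‖y - μ‖ ^ 2) := by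
    intro μ y
    rw [hφ']
    have h1 : c₀ * ‖y - μ‖ ^ 2 ≤ Q (fun i => (y - μ) i) := hQlb (y - μ)
    rw [hQarg]
    have : -(Q (fun i => (y - μ) i)) / 2 ≤ -(c₀ / 2) * ‖y - μ‖ ^ 2 := by linarith
    exact mul_le_mul_of_nonneg_left (Real.exp_le_exp.2 this) hK.le
  -- ## the data density p
  set p : EuclideanSpace ℝ (Fin d) → (Fin n → EuclideanSpace ℝ (Fin d)) → ℝ := fun μ ξ => ∏ i, φ μ (ξ i) with hpdef
  have hp_eq : ∀ (μ : EuclideanSpace ℝ (Fin d)) (ξ : Fin n → EuclideanSpace ℝ (Fin d)),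
      p μ ξ = K ^ n * rexp (-(∑ i, Q (fun k => ξ i k - μ k)) / 2) := by
    intro μ ξ
    rw [hpdef]
    simp only [hφ']
    rw [Finset.prod_mul_distrib, Finset.prod_const, Finset.card_univ, Fintype.card_fin,
      ← Real.exp_sum]
    congr 1
    rw [← Finset.sum_div, ← Finset.sum_neg_distrib]
  have hp_pos : ∀ μ ξ, 0 < p μ ξ := fun μ ξ => Finset.prod_pos fun i _ => hφpos μ (ξ i)
  have hp_le : ∀ (μ : EuclideanSpace ℝ (Fin d)) (ξ : Fin n → EuclideanSpace ℝ (Fin d)),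
      p μ ξ ≤ K ^ n * rexp (-(c₀ / 2) * ∑ i, ‖ξ i - μ‖ ^ 2) := by
    intro μ ξ
    rw [hp_eq]
    have h1 : c₀ * ∑ i, ‖ξ i - μ‖ ^ 2 ≤ ∑ i, Q (fun k => ξ i k - μ k) := by
      rw [Finset.mul_sum]
      refine Finset.sum_le_sum fun i _ => ?_
      exact le_trans (le_of_eq rfl) (hQlb (ξ i - μ))
    have h2 : -(∑ i, Q (fun k => ξ i k - μ k)) / 2 ≤ -(c₀ / 2) * ∑ i, ‖ξ i - μ‖ ^ 2 := by
      linarith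
    exact mul_le_mul_of_nonneg_left (Real.exp_le_exp.2 h2) (by positivity)
  -- ## continuity of the densities
  have hφcont : Continuous (fun z : EuclideanSpace ℝ (Fin d) × EuclideanSpace ℝ (Fin d) => φ z.1 z.2) := by
    have heq : (fun z : EuclideanSpace ℝ (Fin d) × EuclideanSpace ℝ (Fin d) => φ z.1 z.2)
        = fun z : EuclideanSpace ℝ (Fin d) × EuclideanSpace ℝ (Fin d) => K * rexp (-(Q (fun i => (z.2 - z.1) i)) / 2) := by
      funext z; rw [hφ' z.1 z.2]; rfl
    rw [heq]
    have hQc : Continuous fun v : EuclideanSpace ℝ (Fin d) => Q (fun i => v i) := aux_Q_continuous d M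
    exact continuous_const.mul
      (((hQc.comp (continuous_snd.sub continuous_fst)).neg.div_const 2).rexp)
  have hp_cont : Continuous (fun z : EuclideanSpace ℝ (Fin d) × (Fin n → EuclideanSpace ℝ (Fin d)) => p z.1 z.2) := by
    rw [hpdef]
    exact continuous_finset_prod _ fun i _ =>
      hφcont.comp (continuous_fst.prodMk ((continuous_apply i).comp continuous_snd))
  -- ## integrability of densities
  have hφint : ∀ μ : EuclideanSpace ℝ (Fin d), Integrable (fun y : EuclideanSpace ℝ (Fin d) => φ μ y) := by
    intro μ
    have hb : Integrable (fun y : EuclideanSpace ℝ (Fin d) => K * rexp (-(c₀ / 2) * ‖y - μ‖ ^ 2)) :=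
      ((aux_integrable_gauss d (c₀ / 2) (half_pos hc₀)).comp_sub_right μ).const_mul K
    refine hb.mono' ((hφcont.comp (continuous_const.prodMk continuous_id)).aestronglyMeasurable)
      ?_
    filter_upwards with y
    rw [Real.norm_eq_abs, abs_of_pos (hφpos μ y)]
    exact hφle μ y
  have hpint : ∀ μ : EuclideanSpace ℝ (Fin d), Integrable (p μ) := by
    intro μ
    exact Integrable.fintype_prod (f := fun _ y => φ μ y) (fun i => hφint μ)
  -- ## the min-term m and its bound
  set m : EuclideanSpace ℝ (Fin d) → ℝ := fun μ => sInf ((fun x' => ⟪μ, x'⟫) '' X) with hmdef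
  have hmabs : ∀ μ : EuclideanSpace ℝ (Fin d), |m μ| ≤ ‖μ‖ * R := by
    intro μ
    have hic : Continuous fun x' : EuclideanSpace ℝ (Fin d) => ⟪μ, x'⟫ := continuous_const.inner continuous_id
    have hcompact : IsCompact ((fun x' : EuclideanSpace ℝ (Fin d) => ⟪μ, x'⟫) '' X) := hXcompact.image hic
    have hmem : m μ ∈ (fun x' : EuclideanSpace ℝ (Fin d) => ⟪μ, x'⟫) '' X :=
      hcompact.sInf_mem (hXne.image _)
    obtain ⟨x₀, hx₀X, hx₀⟩ := hmem
    rw [← hx₀]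
    calc |⟪μ, x₀⟫| ≤ ‖μ‖ * ‖x₀‖ := abs_real_inner_le_norm μ x₀
      _ ≤ ‖μ‖ * R := mul_le_mul_of_nonneg_left (hRX x₀ hx₀X) (norm_nonneg μ)
  -- ## risk formula
  have hinner_int : ∀ (μ : EuclideanSpace ℝ (Fin d)) (δ : (Fin n → EuclideanSpace ℝ (Fin d)) → EuclideanSpace ℝ (Fin d)), Measurable δ → (∀ ξ, δ ξ ∈ X) →
      Integrable (fun ξ => ⟪μ, δ ξ⟫ * p μ ξ) := by
    intro μ δ hδ hδX
    refine ((hpint μ).const_mul (‖μ‖ * R)).mono' ?_ ?_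
    · have h1 : Measurable fun ξ : Fin n → EuclideanSpace ℝ (Fin d) => ⟪μ, δ ξ⟫ :=
        ((continuous_const.inner continuous_id).measurable).comp hδ
      have h2 : Measurable fun ξ : Fin n → EuclideanSpace ℝ (Fin d) => p μ ξ :=
        (hp_cont.comp (continuous_const.prodMk continuous_id)).measurable
      exact (h1.mul h2).aestronglyMeasurable
    · filter_upwards with ξ
      rw [Real.norm_eq_abs, abs_mul, abs_of_pos (hp_pos μ ξ)]
      refine mul_le_mul_of_nonneg_right ?_ (hp_pos μ ξ).le
      calc |⟪μ, δ ξ⟫| ≤ ‖μ‖ * ‖δ ξ‖ := abs_real_inner_le_norm _ _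
        _ ≤ ‖μ‖ * R := mul_le_mul_of_nonneg_left (hRX _ (hδX ξ)) (norm_nonneg μ)
  have hrisk_eq : ∀ (μ : EuclideanSpace ℝ (Fin d)) (δ : (Fin n → EuclideanSpace ℝ (Fin d)) → EuclideanSpace ℝ (Fin d)), Measurable δ → (∀ ξ, δ ξ ∈ X) →
      risk μ δ = (∫ ξ, ⟪μ, δ ξ⟫ * p μ ξ) - m μ * ∫ ξ, p μ ξ := by
    intro μ δ hδ hδX
    rw [hrisk]
    have heq : ∀ ξ : Fin n → EuclideanSpace ℝ (Fin d), L μ (δ ξ) * ∏ i, φ μ (ξ i)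
        = ⟪μ, δ ξ⟫ * p μ ξ - m μ * p μ ξ := by
      intro ξ
      rw [hL, hpdef]
      ring
    rw [integral_congr_ae (Filter.Eventually.of_forall heq)]
    rw [integral_sub (hinner_int μ δ hδ hδX) ((hpint μ).const_mul (m μ))]
    rw [integral_const_mul]
  have hdiff : ∀ μ : EuclideanSpace ℝ (Fin d), risk μ δ' - risk μ δSA
      = ∫ ξ, (⟪μ, δ' ξ⟫ - ⟪μ, δSA ξ⟫) * p μ ξ := by
    intro μ
    have heq : ∀ ξ : Fin n → EuclideanSpace ℝ (Fin d), (⟪μ, δ' ξ⟫ - ⟪μ, δSA ξ⟫) * p μ ξ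
        = ⟪μ, δ' ξ⟫ * p μ ξ - ⟪μ, δSA ξ⟫ * p μ ξ := fun ξ => by ring
    have hR : (∫ ξ, (⟪μ, δ' ξ⟫ - ⟪μ, δSA ξ⟫) * p μ ξ)
        = (∫ ξ, ⟪μ, δ' ξ⟫ * p μ ξ) - ∫ ξ, ⟪μ, δSA ξ⟫ * p μ ξ := by
      rw [integral_congr_ae (Filter.Eventually.of_forall heq)]
      exact integral_sub (hinner_int μ δ' hδ'm hδ'X) (hinner_int μ δSA hmeas (fun ξ => (hSA ξ).1))
    rw [hrisk_eq μ δ' hδ'm hδ'X, hrisk_eq μ δSA hmeas (fun ξ => (hSA ξ).1), hR]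
    ring
  -- ## the Gaussian prior density
  set pr : EuclideanSpace ℝ (Fin d) → ℝ := fun μ => K * rexp (-(Q (fun i => μ i)) / 2)
    with hprdef
  have hpr_pos : ∀ μ, 0 < pr μ := by intro μ; rw [hprdef]; positivity
  have hpr_cont : Continuous pr := by
    rw [hprdef]
    exact continuous_const.mul (((aux_Q_continuous d M).neg.div_const 2).rexp)
  have hpr_le : ∀ μ : EuclideanSpace ℝ (Fin d), pr μ ≤ K * rexp (-(c₀ / 2) * ‖μ‖ ^ 2) := by
    intro μ
    rw [hprdef]
    have h1 : c₀ * ‖μ‖ ^ 2 ≤ Q (fun i => μ i) := hQlb μ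
    exact mul_le_mul_of_nonneg_left (Real.exp_le_exp.2 (by linarith)) hK.le
  -- ## the joint function F and its integrability
  set γ : ℝ := c₀ / (8 * ((n : ℝ) + 1)) with hγdef
  have hγ : 0 < γ := by rw [hγdef]; positivity
  set F : EuclideanSpace ℝ (Fin d) × (Fin n → EuclideanSpace ℝ (Fin d)) → ℝ :=
    fun z => (⟪z.1, δ' z.2⟫ - ⟪z.1, δSA z.2⟫) * (p z.1 z.2 * pr z.1) with hFdef
  have hFmeas : AEStronglyMeasurable F
      ((volume : Measure (EuclideanSpace ℝ (Fin d))).prod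
        (volume : Measure (Fin n → EuclideanSpace ℝ (Fin d)))) := by
    apply Measurable.aestronglyMeasurable
    have hinner : ∀ (δ : (Fin n → EuclideanSpace ℝ (Fin d)) → EuclideanSpace ℝ (Fin d)),
        Measurable δ → Measurable fun z : EuclideanSpace ℝ (Fin d) ×
          (Fin n → EuclideanSpace ℝ (Fin d)) => ⟪z.1, δ z.2⟫ := by
      intro δ hδ
      have : (fun z : EuclideanSpace ℝ (Fin d) × (Fin n → EuclideanSpace ℝ (Fin d)) =>
          ⟪z.1, δ z.2⟫) = (fun y : EuclideanSpace ℝ (Fin d) × EuclideanSpace ℝ (Fin d) =>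
            ⟪y.1, y.2⟫) ∘ fun z => (z.1, δ z.2) := rfl
      rw [this]
      exact (continuous_inner.measurable).comp
        (measurable_fst.prodMk (hδ.comp measurable_snd))
    exact ((hinner δ' hδ'm).sub (hinner δSA hmeas)).mul
      ((hp_cont.mul (hpr_cont.comp continuous_fst)).measurable)
  -- quadratic comparison
  have hquad : ∀ (μ : EuclideanSpace ℝ (Fin d)) (ξ : Fin n → EuclideanSpace ℝ (Fin d)),
      γ * ((∑ i, ‖ξ i‖ ^ 2) + ‖μ‖ ^ 2) ≤ (c₀ / 2) * ((∑ i, ‖ξ i - μ‖ ^ 2) + ‖μ‖ ^ 2) := by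
    intro μ ξ
    have hsum : (∑ i, ‖ξ i‖ ^ 2) ≤ 2 * (∑ i, ‖ξ i - μ‖ ^ 2) + 2 * (n : ℝ) * ‖μ‖ ^ 2 := by
      have h1 : ∀ i : Fin n, ‖ξ i‖ ^ 2 ≤ 2 * ‖ξ i - μ‖ ^ 2 + 2 * ‖μ‖ ^ 2 :=
        fun i => aux_sq_split (ξ i) μ
      calc (∑ i, ‖ξ i‖ ^ 2) ≤ ∑ i : Fin n, (2 * ‖ξ i - μ‖ ^ 2 + 2 * ‖μ‖ ^ 2) :=
            Finset.sum_le_sum fun i _ => h1 i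
        _ = 2 * (∑ i, ‖ξ i - μ‖ ^ 2) + 2 * (n : ℝ) * ‖μ‖ ^ 2 := by
            rw [Finset.sum_add_distrib, ← Finset.mul_sum, Finset.sum_const, Finset.card_univ,
              Fintype.card_fin, nsmul_eq_mul]
            ring
    have hsum_nonneg : (0:ℝ) ≤ ∑ i, ‖ξ i - μ‖ ^ 2 :=
      Finset.sum_nonneg fun i _ => sq_nonneg _
    have hx8 : (0:ℝ) < 8 * ((n : ℝ) + 1) := by positivity
    have hγle1 : 2 * γ ≤ c₀ / 2 := by
      rw [hγdef, ← mul_div_assoc, div_le_div_iff₀ hx8 (by norm_num)]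
      nlinarith [Nat.cast_nonneg (α := ℝ) n, hc₀.le]
    have hγle2 : γ * (2 * (n:ℝ) + 1) ≤ c₀ / 2 := by
      rw [hγdef, div_mul_eq_mul_div, div_le_div_iff₀ hx8 (by norm_num)]
      nlinarith [Nat.cast_nonneg (α := ℝ) n, hc₀.le]
    nlinarith [sq_nonneg ‖μ‖, mul_le_mul_of_nonneg_left hsum hγ.le]
  -- pointwise bound for F
  set G : EuclideanSpace ℝ (Fin d) × (Fin n → EuclideanSpace ℝ (Fin d)) → ℝ :=
    fun z => (2 * R * K ^ (n + 1)) *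
      ((‖z.1‖ * rexp (-γ * ‖z.1‖ ^ 2)) * ∏ i, rexp (-γ * ‖z.2 i‖ ^ 2)) with hGdef
  have hinner_bound : ∀ (μ : EuclideanSpace ℝ (Fin d))
      (ξ : Fin n → EuclideanSpace ℝ (Fin d)),
      |⟪μ, δ' ξ⟫ - ⟪μ, δSA ξ⟫| ≤ 2 * R * ‖μ‖ := by
    intro μ ξ
    have h1 : |⟪μ, δ' ξ⟫| ≤ ‖μ‖ * R := by
      calc |⟪μ, δ' ξ⟫| ≤ ‖μ‖ * ‖δ' ξ‖ := abs_real_inner_le_norm _ _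
        _ ≤ ‖μ‖ * R := mul_le_mul_of_nonneg_left (hRX _ (hδ'X ξ)) (norm_nonneg μ)
    have h2 : |⟪μ, δSA ξ⟫| ≤ ‖μ‖ * R := by
      calc |⟪μ, δSA ξ⟫| ≤ ‖μ‖ * ‖δSA ξ‖ := abs_real_inner_le_norm _ _
        _ ≤ ‖μ‖ * R := mul_le_mul_of_nonneg_left (hRX _ (hSA ξ).1) (norm_nonneg μ)
    calc |⟪μ, δ' ξ⟫ - ⟪μ, δSA ξ⟫| ≤ |⟪μ, δ' ξ⟫| + |⟪μ, δSA ξ⟫| := abs_sub _ _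
      _ ≤ 2 * R * ‖μ‖ := by linarith
  have hppr_le : ∀ (μ : EuclideanSpace ℝ (Fin d)) (ξ : Fin n → EuclideanSpace ℝ (Fin d)),
      p μ ξ * pr μ ≤ K ^ (n + 1) *
        (rexp (-γ * ‖μ‖ ^ 2) * ∏ i, rexp (-γ * ‖ξ i‖ ^ 2)) := by
    intro μ ξ
    have h1 : p μ ξ * pr μ ≤
        (K ^ n * rexp (-(c₀ / 2) * ∑ i, ‖ξ i - μ‖ ^ 2)) *
          (K * rexp (-(c₀ / 2) * ‖μ‖ ^ 2)) :=
      mul_le_mul (hp_le μ ξ) (hpr_le μ) (hpr_pos μ).le (by positivity)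
    have h2 : (K ^ n * rexp (-(c₀ / 2) * ∑ i, ‖ξ i - μ‖ ^ 2)) *
          (K * rexp (-(c₀ / 2) * ‖μ‖ ^ 2))
        = K ^ (n + 1) * rexp (-(c₀ / 2) * ((∑ i, ‖ξ i - μ‖ ^ 2) + ‖μ‖ ^ 2)) := by
      calc (K ^ n * rexp (-(c₀ / 2) * ∑ i, ‖ξ i - μ‖ ^ 2)) * (K * rexp (-(c₀ / 2) * ‖μ‖ ^ 2))
          = K ^ (n + 1) * (rexp (-(c₀ / 2) * ∑ i, ‖ξ i - μ‖ ^ 2) *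
              rexp (-(c₀ / 2) * ‖μ‖ ^ 2)) := by ring
        _ = K ^ (n + 1) * rexp (-(c₀ / 2) * ∑ i, ‖ξ i - μ‖ ^ 2 + -(c₀ / 2) * ‖μ‖ ^ 2) := by
            rw [← Real.exp_add]
        _ = K ^ (n + 1) * rexp (-(c₀ / 2) * ((∑ i, ‖ξ i - μ‖ ^ 2) + ‖μ‖ ^ 2)) := by
            congr 1; ring
    have h3 : rexp (-(c₀ / 2) * ((∑ i, ‖ξ i - μ‖ ^ 2) + ‖μ‖ ^ 2))
        ≤ rexp (-γ * ((∑ i, ‖ξ i‖ ^ 2) + ‖μ‖ ^ 2)) := by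
      apply Real.exp_le_exp.2
      have := hquad μ ξ
      linarith
    have h4 : rexp (-γ * ((∑ i, ‖ξ i‖ ^ 2) + ‖μ‖ ^ 2))
        = rexp (-γ * ‖μ‖ ^ 2) * ∏ i, rexp (-γ * ‖ξ i‖ ^ 2) := by
      rw [← Real.exp_sum, ← Real.exp_add]
      congr 1
      simp only [neg_mul]
      rw [Finset.sum_neg_distrib, ← Finset.mul_sum]
      ring
    calc p μ ξ * pr μ ≤ _ := h1
      _ = K ^ (n + 1) * rexp (-(c₀ / 2) * ((∑ i, ‖ξ i - μ‖ ^ 2) + ‖μ‖ ^ 2)) := h2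
      _ ≤ K ^ (n + 1) * rexp (-γ * ((∑ i, ‖ξ i‖ ^ 2) + ‖μ‖ ^ 2)) := by
          exact mul_le_mul_of_nonneg_left h3 (by positivity)
      _ = K ^ (n + 1) * (rexp (-γ * ‖μ‖ ^ 2) * ∏ i, rexp (-γ * ‖ξ i‖ ^ 2)) := by rw [h4]
  have hFbound : ∀ z, ‖F z‖ ≤ G z := by
    intro z
    rw [hFdef, hGdef, Real.norm_eq_abs, abs_mul,
      abs_of_pos (mul_pos (hp_pos z.1 z.2) (hpr_pos z.1))]
    calc |⟪z.1, δ' z.2⟫ - ⟪z.1, δSA z.2⟫| * (p z.1 z.2 * pr z.1)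
        ≤ (2 * R * ‖z.1‖) * (K ^ (n + 1) *
            (rexp (-γ * ‖z.1‖ ^ 2) * ∏ i, rexp (-γ * ‖z.2 i‖ ^ 2))) := by
          exact mul_le_mul (hinner_bound z.1 z.2) (hppr_le z.1 z.2)
            (mul_pos (hp_pos z.1 z.2) (hpr_pos z.1)).le (by positivity)
      _ = (2 * R * K ^ (n + 1)) *
            ((‖z.1‖ * rexp (-γ * ‖z.1‖ ^ 2)) * ∏ i, rexp (-γ * ‖z.2 i‖ ^ 2)) := by ring
  have hGint : Integrable G
      ((volume : Measure (EuclideanSpace ℝ (Fin d))).prod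
        (volume : Measure (Fin n → EuclideanSpace ℝ (Fin d)))) := by
    rw [hGdef]
    have h1 : Integrable (fun μ : EuclideanSpace ℝ (Fin d) =>
        ‖μ‖ * rexp (-γ * ‖μ‖ ^ 2)) volume := aux_integrable_norm_gauss d γ hγ
    have h2 : Integrable (fun ξ : Fin n → EuclideanSpace ℝ (Fin d) =>
        ∏ i, rexp (-γ * ‖ξ i‖ ^ 2)) volume :=
      Integrable.fintype_prod (f := fun _ v => rexp (-γ * ‖v‖ ^ 2))
        (fun i => aux_integrable_gauss d γ hγ)
    exact (h1.mul_prod h2).const_mul _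
  have hFint : Integrable F
      ((volume : Measure (EuclideanSpace ℝ (Fin d))).prod
        (volume : Measure (Fin n → EuclideanSpace ℝ (Fin d)))) :=
    hGint.mono' hFmeas (Filter.Eventually.of_forall hFbound)
  -- ## first direction: ∫F ≤ 0
  have hsect : ∀ μ : EuclideanSpace ℝ (Fin d),
      (∫ ξ, F (μ, ξ)) = (risk μ δ' - risk μ δSA) * pr μ := by
    intro μ
    rw [hdiff μ, ← integral_mul_const]
    congr 1
    funext ξ
    rw [hFdef]
    ring
  have hIle : (∫ z, F z ∂((volume : Measure (EuclideanSpace ℝ (Fin d))).prod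
      (volume : Measure (Fin n → EuclideanSpace ℝ (Fin d))))) ≤ 0 := by
    rw [integral_prod F hFint]
    refine integral_nonpos fun μ => ?_
    show (∫ ξ, F (μ, ξ)) ≤ 0
    rw [hsect μ]
    exact mul_nonpos_of_nonpos_of_nonneg (by linarith [hle μ]) (hpr_pos μ).le
  -- ## second direction: ∫F ≥ 0, via the posterior-mean computation
  have hIge : 0 ≤ ∫ z, F z ∂((volume : Measure (EuclideanSpace ℝ (Fin d))).prod
      (volume : Measure (Fin n → EuclideanSpace ℝ (Fin d)))) := by
    rw [integral_prod_symm F hFint]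
    apply integral_nonneg
    intro ξ
    show 0 ≤ ∫ μ, F (μ, ξ)
    -- notation for this ξ
    set s : EuclideanSpace ℝ (Fin d) := ∑ i, ξ i with hsdef
    set a : EuclideanSpace ℝ (Fin d) := ((n : ℝ) + 1)⁻¹ • s with hadef
    set w : EuclideanSpace ℝ (Fin d) := δ' ξ - δSA ξ with hwdef
    set C : ℝ := K ^ (n + 1) *
      rexp (-((∑ i, Q (fun k => ξ i k)) - ((n : ℝ) + 1) * Q (fun k => a k)) / 2) with hCdef
    have hC : 0 < C := by rw [hCdef]; positivity
    set g0 : EuclideanSpace ℝ (Fin d) → ℝ :=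
      fun u => rexp (-(((n : ℝ) + 1) * Q (fun k => u k)) / 2) with hg0def
    have hg0pos : ∀ u, 0 < g0 u := fun u => Real.exp_pos _
    have hg0cont : Continuous g0 := by
      rw [hg0def]
      exact ((continuous_const.mul (aux_Q_continuous d M)).neg.div_const 2).rexp
    have hn1 : (0:ℝ) < (n : ℝ) + 1 := by positivity
    have hg0le : ∀ u : EuclideanSpace ℝ (Fin d),
        g0 u ≤ rexp (-((((n : ℝ) + 1) * c₀) / 2) * ‖u‖ ^ 2) := by
      intro u
      rw [hg0def]
      apply Real.exp_le_exp.2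
      have h1 : c₀ * ‖u‖ ^ 2 ≤ Q (fun k => u k) := hQlb u
      have h2 : ((n : ℝ) + 1) * (c₀ * ‖u‖ ^ 2) ≤ ((n : ℝ) + 1) * Q (fun k => u k) :=
        mul_le_mul_of_nonneg_left h1 hn1.le
      nlinarith
    have hg0int : Integrable g0 := by
      refine (aux_integrable_gauss d ((((n : ℝ) + 1) * c₀) / 2) (by positivity)).mono'
        hg0cont.aestronglyMeasurable ?_
      filter_upwards with u
      rw [Real.norm_eq_abs, abs_of_pos (hg0pos u)]
      exact hg0le u
    have hg0neg : ∀ u : EuclideanSpace ℝ (Fin d), g0 (-u) = g0 u := by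
      intro u
      simp only [hg0def]
      have hQneg : Q (fun k => (-u) k) = Q (fun k => u k) := by
        show ((fun k => (-u) k) ⬝ᵥ M.mulVec (fun k => (-u) k))
          = (fun k => u k) ⬝ᵥ M.mulVec (fun k => u k)
        have h : (fun k => (-u) k) = -(fun k => u k) := rfl
        rw [h, neg_dotProduct, Matrix.mulVec_neg, dotProduct_neg, neg_neg]
      rw [hQneg]
    -- the density product as a translated centered Gaussian
    have hprod_eq : ∀ μ : EuclideanSpace ℝ (Fin d), p μ ξ * pr μ = C * g0 (μ - a) := by
      intro μ
      have hkey' : (∑ i, Q (fun k => ξ i k - μ k)) + Q (fun k => μ k)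
          = ((n : ℝ) + 1) * Q (fun k => (μ - a) k)
            + ((∑ i, Q (fun k => ξ i k)) - ((n : ℝ) + 1) * Q (fun k => a k)) :=
        by
          have h := aux_key_identity d n M hMsym (fun i => (ξ i).ofLp) μ.ofLp
          have e : (μ - a).ofLp = μ.ofLp - ((n:ℝ)+1)⁻¹ • ∑ i, (ξ i).ofLp := by
            simp [hadef, hsdef]
          have e2 : a.ofLp = ((n:ℝ)+1)⁻¹ • ∑ i, (ξ i).ofLp := by simp [hadef, hsdef]
          show ((∑ i, Q ((ξ i).ofLp - μ.ofLp)) + Q μ.ofLp) = ((n:ℝ)+1) * Q (μ - a).ofLp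
            + ((∑ i, Q (ξ i).ofLp) - ((n:ℝ)+1) * Q a.ofLp)
          rw [e, e2]; exact h
      rw [hp_eq μ ξ]
      simp only [hprdef, hCdef, hg0def]
      have e1 : ∀ A B : ℝ, K ^ n * rexp A * (K * rexp B) = K ^ (n + 1) * rexp (A + B) := by
        intro A B; rw [Real.exp_add]; ring
      have e2 : ∀ A B : ℝ, (K ^ (n + 1) * rexp A) * rexp B = K ^ (n + 1) * rexp (A + B) := by
        intro A B; rw [Real.exp_add, mul_assoc]
      rw [e1, e2]
      refine congrArg (fun t => K ^ (n + 1) * rexp t) ?_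
      linarith [hkey']
    have hFeq : ∀ μ : EuclideanSpace ℝ (Fin d),
        F (μ, ξ) = ⟪μ, w⟫ * (C * g0 (μ - a)) := by
      intro μ
      simp only [hFdef]
      rw [hprod_eq μ, hwdef, inner_sub_right]
    have hwR : ‖w‖ ≤ 2 * R := by
      rw [hwdef]
      calc ‖δ' ξ - δSA ξ‖ ≤ ‖δ' ξ‖ + ‖δSA ξ‖ := norm_sub_le _ _
        _ ≤ 2 * R := by linarith [hRX _ (hδ'X ξ), hRX _ (hSA ξ).1]
    have hint1 : Integrable (fun u : EuclideanSpace ℝ (Fin d) => ⟪u, w⟫ * (C * g0 u)) := by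
      refine ((aux_integrable_norm_gauss d ((((n : ℝ) + 1) * c₀) / 2)
        (by positivity)).const_mul (‖w‖ * C)).mono' ?_ ?_
      · exact ((continuous_id.inner continuous_const).mul
          (continuous_const.mul hg0cont)).aestronglyMeasurable
      · filter_upwards with u
        rw [Real.norm_eq_abs, abs_mul, abs_of_pos (mul_pos hC (hg0pos u))]
        calc |⟪u, w⟫| * (C * g0 u) ≤ (‖u‖ * ‖w‖) * (C * rexp (-((((n : ℝ) + 1) * c₀) / 2) * ‖u‖ ^ 2)) := by
              exact mul_le_mul (abs_real_inner_le_norm u w)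
                (mul_le_mul_of_nonneg_left (hg0le u) hC.le)
                (mul_pos hC (hg0pos u)).le (by positivity)
          _ = ‖w‖ * C * (‖u‖ * rexp (-((((n : ℝ) + 1) * c₀) / 2) * ‖u‖ ^ 2)) := by ring
    have hint2 : Integrable (fun u : EuclideanSpace ℝ (Fin d) =>
        ⟪a, w⟫ * (C * g0 u)) := ((hg0int.const_mul C).const_mul _)
    have h5 : (∫ μ, F (μ, ξ)) = ∫ μ, ⟪μ, w⟫ * (C * g0 (μ - a)) :=
      integral_congr_ae (Filter.Eventually.of_forall hFeq)
    have h6 : (∫ μ, ⟪μ, w⟫ * (C * g0 (μ - a))) = ∫ u, ⟪u + a, w⟫ * (C * g0 u) := by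
      rw [← integral_add_right_eq_self (fun μ : EuclideanSpace ℝ (Fin d) =>
        ⟪μ, w⟫ * (C * g0 (μ - a))) a]
      congr 1
      funext u
      rw [add_sub_cancel_right]
    have h7 : (∫ u, ⟪u + a, w⟫ * (C * g0 u))
        = ∫ u, (⟪u, w⟫ * (C * g0 u) + ⟪a, w⟫ * (C * g0 u)) := by
      congr 1
      funext u
      rw [inner_add_left]
      ring
    have h8 : (∫ u, (⟪u, w⟫ * (C * g0 u) + ⟪a, w⟫ * (C * g0 u)))
        = (∫ u, ⟪u, w⟫ * (C * g0 u)) + ⟪a, w⟫ * (C * ∫ u, g0 u) := by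
      rw [integral_add hint1 hint2, integral_const_mul, integral_const_mul]
    have hodd : (∫ u, ⟪u, w⟫ * (C * g0 u)) = 0 := by
      have h := integral_neg_eq_self (fun u : EuclideanSpace ℝ (Fin d) =>
        ⟪u, w⟫ * (C * g0 u)) (volume : Measure (EuclideanSpace ℝ (Fin d)))
      have heq : ∀ u : EuclideanSpace ℝ (Fin d),
          ⟪-u, w⟫ * (C * g0 (-u)) = -(⟪u, w⟫ * (C * g0 u)) := by
        intro u
        rw [hg0neg, inner_neg_left]
        ring
      rw [integral_congr_ae (Filter.Eventually.of_forall heq), integral_neg] at h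
      linarith
    have haw : 0 ≤ ⟪a, w⟫ := by
      have hnpos : (0:ℝ) < (n : ℝ) := by exact_mod_cast hn
      have h1 := (hSA ξ).2 (δ' ξ) (hδ'X ξ)
      rw [real_inner_smul_left, real_inner_smul_left] at h1
      have h2 : ⟪s, δSA ξ⟫ ≤ ⟪s, δ' ξ⟫ :=
        le_of_mul_le_mul_left (by simpa [hsdef] using h1) (inv_pos.2 hnpos)
      have h3 : 0 ≤ ⟪s, w⟫ := by
        rw [hwdef, inner_sub_right]
        linarith
      rw [hadef, real_inner_smul_left]
      exact mul_nonneg (inv_pos.2 (by positivity : (0:ℝ) < (n:ℝ)+1)).le h3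
    have hg0int_nonneg : 0 ≤ ∫ u, g0 u := integral_nonneg fun u => (hg0pos u).le
    rw [h5, h6, h7, h8, hodd, zero_add]
    exact mul_nonneg haw (mul_nonneg hC.le hg0int_nonneg)
  -- ## combine: ∫ F = 0, hence risk difference vanishes a.e.
  have hIzero : (∫ z, F z ∂((volume : Measure (EuclideanSpace ℝ (Fin d))).prod
      (volume : Measure (Fin n → EuclideanSpace ℝ (Fin d))))) = 0 :=
    le_antisymm hIle hIge
  have hhint : Integrable (fun μ => ∫ ξ, F (μ, ξ)) (volume :
      Measure (EuclideanSpace ℝ (Fin d))) := hFint.integral_prod_left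
  have hdouble : (∫ μ, ∫ ξ, F (μ, ξ)) = 0 := by
    rw [← integral_prod F hFint]
    exact hIzero
  have hneg0 : (∫ μ, -(∫ ξ, F (μ, ξ))) = 0 := by
    rw [integral_neg, hdouble, neg_zero]
  have hae : (fun μ => -(∫ ξ, F (μ, ξ))) =ᵐ[volume] 0 := by
    refine (integral_eq_zero_iff_of_nonneg_ae ?_ hhint.neg).1 hneg0
    filter_upwards with μ
    have h1 : (∫ ξ, F (μ, ξ)) ≤ 0 := by
      rw [hsect μ]
      exact mul_nonpos_of_nonpos_of_nonneg (by linarith [hle μ]) (hpr_pos μ).le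
    simpa using h1
  have haeD : ∀ᵐ μ : EuclideanSpace ℝ (Fin d), risk μ δ' - risk μ δSA = 0 := by
    filter_upwards [hae] with μ hμ
    have h0 : (∫ ξ, F (μ, ξ)) = 0 := by
      have := hμ
      simp only [Pi.zero_apply, neg_eq_zero] at this
      exact this
    rw [hsect μ] at h0
    rcases mul_eq_zero.1 h0 with h | h
    · exact h
    · exact absurd h (hpr_pos μ).ne'
  -- ## continuity of the risk difference in μ at μ₀
  set D : EuclideanSpace ℝ (Fin d) → ℝ :=
    fun μ => ∫ ξ, (⟪μ, δ' ξ⟫ - ⟪μ, δSA ξ⟫) * p μ ξ with hDdef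
  have hDae : ∀ᵐ μ : EuclideanSpace ℝ (Fin d), D μ = 0 := by
    filter_upwards [haeD] with μ h
    have := hdiff μ
    simp only [hDdef]
    rw [← this]
    exact h
  have hDcont : ContinuousAt D μ₀ := by
    simp only [hDdef]
    set bound : (Fin n → EuclideanSpace ℝ (Fin d)) → ℝ := fun ξ =>
      (2 * R * (‖μ₀‖ + 1)) * ((K ^ n * rexp ((c₀ / 2) * (n : ℝ) * (‖μ₀‖ + 1) ^ 2)) *
        ∏ i, rexp (-(c₀ / 4) * ‖ξ i‖ ^ 2)) with hbddef
    have hbint : Integrable bound (volume :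
        Measure (Fin n → EuclideanSpace ℝ (Fin d))) := by
      rw [hbddef]
      exact ((Integrable.fintype_prod (f := fun _ v => rexp (-(c₀ / 4) * ‖v‖ ^ 2))
        (fun i => aux_integrable_gauss d (c₀ / 4) (by positivity))).const_mul
          _).const_mul _
    apply continuousAt_of_dominated (bound := bound)
    · filter_upwards with μ
      have h1 : Measurable fun ξ : Fin n → EuclideanSpace ℝ (Fin d) =>
          ⟪μ, δ' ξ⟫ - ⟪μ, δSA ξ⟫ :=
        (((continuous_const.inner continuous_id).measurable).comp hδ'm).sub
          (((continuous_const.inner continuous_id).measurable).comp hmeas)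
      have h2 : Measurable fun ξ : Fin n → EuclideanSpace ℝ (Fin d) => p μ ξ :=
        (hp_cont.comp (continuous_const.prodMk continuous_id)).measurable
      exact (h1.mul h2).aestronglyMeasurable
    · filter_upwards [Metric.ball_mem_nhds μ₀ one_pos] with μ hμ
      filter_upwards with ξ
      have hμle : ‖μ‖ ≤ ‖μ₀‖ + 1 := by
        have := mem_ball_iff_norm.1 hμ
        calc ‖μ‖ = ‖μ₀ + (μ - μ₀)‖ := by rw [add_sub_cancel]
          _ ≤ ‖μ₀‖ + ‖μ - μ₀‖ := norm_add_le _ _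
          _ ≤ ‖μ₀‖ + 1 := by linarith
      have h1 : |⟪μ, δ' ξ⟫ - ⟪μ, δSA ξ⟫| ≤ 2 * R * (‖μ₀‖ + 1) := by
        calc |⟪μ, δ' ξ⟫ - ⟪μ, δSA ξ⟫| ≤ 2 * R * ‖μ‖ := hinner_bound μ ξ
          _ ≤ 2 * R * (‖μ₀‖ + 1) := by nlinarith [hR0]
      have hsumB : (∑ i, ‖ξ i‖ ^ 2) ≤ 2 * (∑ i, ‖ξ i - μ‖ ^ 2) + 2 * (n : ℝ) * ‖μ‖ ^ 2 := by
        calc (∑ i, ‖ξ i‖ ^ 2) ≤ ∑ i : Fin n, (2 * ‖ξ i - μ‖ ^ 2 + 2 * ‖μ‖ ^ 2) :=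
              Finset.sum_le_sum fun i _ => aux_sq_split (ξ i) μ
          _ = 2 * (∑ i, ‖ξ i - μ‖ ^ 2) + 2 * (n : ℝ) * ‖μ‖ ^ 2 := by
              rw [Finset.sum_add_distrib, ← Finset.mul_sum, Finset.sum_const,
                Finset.card_univ, Fintype.card_fin, nsmul_eq_mul]
              ring
      have hμsq : ‖μ‖ ^ 2 ≤ (‖μ₀‖ + 1) ^ 2 := by
        apply pow_le_pow_left₀ (norm_nonneg μ) hμle
      have hexp : -(c₀ / 2) * (∑ i, ‖ξ i - μ‖ ^ 2)
          ≤ (c₀ / 2) * (n : ℝ) * (‖μ₀‖ + 1) ^ 2 + ∑ i, -(c₀ / 4) * ‖ξ i‖ ^ 2 := by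
        have hsum2 : (∑ i, -(c₀ / 4) * ‖ξ i‖ ^ 2) = -((c₀ / 4) * ∑ i, ‖ξ i‖ ^ 2) := by
          simp only [neg_mul]
          rw [Finset.sum_neg_distrib, ← Finset.mul_sum]
        rw [hsum2]
        have hA : (c₀ / 4) * (∑ i, ‖ξ i‖ ^ 2)
            ≤ (c₀ / 4) * (2 * (∑ i, ‖ξ i - μ‖ ^ 2) + 2 * (n : ℝ) * ‖μ‖ ^ 2) :=
          mul_le_mul_of_nonneg_left hsumB (by positivity)
        have hB : (c₀ / 2) * (n : ℝ) * ‖μ‖ ^ 2 ≤ (c₀ / 2) * (n : ℝ) * (‖μ₀‖ + 1) ^ 2 :=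
          mul_le_mul_of_nonneg_left hμsq (by positivity)
        linarith
      have h2 : p μ ξ ≤ (K ^ n * rexp ((c₀ / 2) * (n : ℝ) * (‖μ₀‖ + 1) ^ 2)) *
          ∏ i, rexp (-(c₀ / 4) * ‖ξ i‖ ^ 2) := by
        calc p μ ξ ≤ K ^ n * rexp (-(c₀ / 2) * ∑ i, ‖ξ i - μ‖ ^ 2) := hp_le μ ξ
          _ ≤ K ^ n * rexp ((c₀ / 2) * (n : ℝ) * (‖μ₀‖ + 1) ^ 2
                + ∑ i, -(c₀ / 4) * ‖ξ i‖ ^ 2) :=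
              mul_le_mul_of_nonneg_left (Real.exp_le_exp.2 hexp) (by positivity)
          _ = (K ^ n * rexp ((c₀ / 2) * (n : ℝ) * (‖μ₀‖ + 1) ^ 2)) *
                ∏ i, rexp (-(c₀ / 4) * ‖ξ i‖ ^ 2) := by
              rw [Real.exp_add, Real.exp_sum]
              ring
      rw [Real.norm_eq_abs, abs_mul, abs_of_pos (hp_pos μ ξ), hbddef]
      exact mul_le_mul h1 h2 (hp_pos μ ξ).le (by nlinarith [hR0, norm_nonneg μ₀])
    · exact hbint
    · filter_upwards with ξ
      exact (((continuous_id.inner continuous_const).sub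
        (continuous_id.inner continuous_const)).mul
          (hp_cont.comp (continuous_id.prodMk continuous_const))).continuousAt
  have hD0 : D μ₀ < 0 := by
    simp only [hDdef]
    rw [← hdiff μ₀]
    linarith
  have hnb : {μ : EuclideanSpace ℝ (Fin d) | D μ < 0} ∈ nhds μ₀ :=
    hDcont.preimage_mem_nhds (Iio_mem_nhds hD0)
  obtain ⟨U, hUsub, hUopen, hUmem⟩ := mem_nhds_iff.1 hnb
  have hUpos : 0 < volume U := hUopen.measure_pos volume ⟨μ₀, hUmem⟩
  have hUnull : volume U = 0 := by
    refine measure_mono_null (fun μ hμU => ?_) (ae_iff.1 hDae)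
    have : D μ < 0 := hUsub hμU
    simpa using this.ne
  exact absurd hUnull hUpos.ne'
end

section
/- Let X ⊆ ℝ^d be a nonempty compact set, let η : ℝ^d → ℝ^d be a measurable function with η(y) ∈ conv(X) for all y, and let η* : ℝ^d → ℝ^d be a measurable function with η*(y) ∈ argmin_{x∈X} y^T x for all y. Then y^T η(y) ≥ y^T η*(y) for every y ∈ ℝ^d; moreover, if the set {y ∈ ℝ^d : η(y) ≠ η*(y)} has strictly positive Lebesgue measure, then the set {y ∈ ℝ^d : y^T η(y) > y^T η*(y)} has strictly positive Lebesgue measure. -/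
open MeasureTheory
open scoped RealInnerProductSpace

/-- If η maps into conv(X) and η* maps into argmin_{x∈X} yᵀx, then
yᵀη(y) ≥ yᵀη*(y) everywhere; and if η ≠ η* on a set of positive Lebesgue measure, then
yᵀη(y) > yᵀη*(y) on a set of positive Lebesgue measure. -/
theorem conv_vs_argmin_linear
    (d : ℕ) (X : Set (EuclideanSpace ℝ (Fin d))) (hXne : X.Nonempty) (hXcompact : IsCompact X)
    (η ηstar : EuclideanSpace ℝ (Fin d) → EuclideanSpace ℝ (Fin d))
    (hη : Measurable η) (hηconv : ∀ y, η y ∈ convexHull ℝ X)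
    (hηstar : Measurable ηstar)
    (hargmin : ∀ y, ηstar y ∈ X ∧ ∀ x ∈ X, ⟪y, ηstar y⟫ ≤ ⟪y, x⟫) :
    (∀ y : EuclideanSpace ℝ (Fin d), ⟪y, ηstar y⟫ ≤ ⟪y, η y⟫) ∧
    (0 < volume {y : EuclideanSpace ℝ (Fin d) | η y ≠ ηstar y} →
      0 < volume {y : EuclideanSpace ℝ (Fin d) | ⟪y, ηstar y⟫ < ⟪y, η y⟫}) := by
  -- the key inequality over the convex hull
  have key : ∀ y, ∀ z ∈ convexHull ℝ X, ⟪y, ηstar y⟫ ≤ ⟪y, z⟫ := by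
    intro y z hz
    have hconv : Convex ℝ {x : EuclideanSpace ℝ (Fin d) | ⟪y, ηstar y⟫ ≤ ⟪y, x⟫} := by
      refine convex_halfSpace_ge ?_ _
      exact ⟨fun a b => inner_add_right _ _ _, fun c a => real_inner_smul_right _ _ _⟩
    exact convexHull_min (fun x hx => (hargmin y).2 x hx) hconv hz
  have part1 : ∀ y : EuclideanSpace ℝ (Fin d), ⟪y, ηstar y⟫ ≤ ⟪y, η y⟫ :=
    fun y => key y (η y) (hηconv y)
  refine ⟨part1, ?_⟩
  intro hD
  by_contra hS
  have hS0 : volume {y : EuclideanSpace ℝ (Fin d) | ⟪y, ηstar y⟫ < ⟪y, η y⟫} = 0 := by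
    by_contra h
    exact hS (pos_iff_ne_zero.mpr h)
  -- the support-like function
  set h : EuclideanSpace ℝ (Fin d) → ℝ := fun y => ⟪y, ηstar y⟫ with hh
  -- bound on X
  obtain ⟨R, hR⟩ : ∃ R : ℝ, ∀ x ∈ X, ‖x‖ ≤ R := hXcompact.isBounded.exists_norm_le
  have hR0 : 0 ≤ R := le_trans (norm_nonneg _) (hR _ hXne.choose_spec)
  -- h is Lipschitz
  have hlip : LipschitzWith R.toNNReal h := by
    refine LipschitzWith.of_dist_le_mul fun y y' => ?_
    have step : ∀ a b : EuclideanSpace ℝ (Fin d), h a - h b ≤ R * dist a b := by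
      intro a b
      have h1 : h a ≤ ⟪a, ηstar b⟫ := (hargmin a).2 _ (hargmin b).1
      have h2 : ⟪a, ηstar b⟫ = h b + ⟪a - b, ηstar b⟫ := by
        simp only [hh]; rw [inner_sub_left]; ring
      have h3 : ⟪a - b, ηstar b⟫ ≤ ‖a - b‖ * ‖ηstar b‖ := real_inner_le_norm _ _
      have h4 : ‖a - b‖ * ‖ηstar b‖ ≤ ‖a - b‖ * R := by
        exact mul_le_mul_of_nonneg_left (hR _ (hargmin b).1) (norm_nonneg _)
      calc h a - h b ≤ ‖a - b‖ * R := by linarith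
        _ = R * dist a b := by rw [dist_eq_norm]; ring
    rw [Real.dist_eq, Real.coe_toNNReal _ hR0, abs_sub_le_iff]
    exact ⟨step y y', by rw [dist_comm]; exact step y' y⟩
  -- a.e. differentiability
  have hdiff : ∀ᵐ y : EuclideanSpace ℝ (Fin d), DifferentiableAt ℝ h y :=
    hlip.ae_differentiableAt (μ := volume)
  -- at points of differentiability with equality, η y = ηstar y
  have huniq : ∀ y, DifferentiableAt ℝ h y → ⟪y, η y⟫ = ⟪y, ηstar y⟫ → η y = ηstar y := by
    intro y hdy heq
    have hderiv : ∀ a : EuclideanSpace ℝ (Fin d), a ∈ convexHull ℝ X → ⟪y, a⟫ = h y →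
        fderiv ℝ h y = innerSL ℝ a := by
      intro a ha hya
      set g : EuclideanSpace ℝ (Fin d) → ℝ := fun z => h z - ⟪a, z⟫ with hg
      have hmax : IsLocalMax g y := by
        apply IsMaxOn.isLocalMax (s := Set.univ)
        · intro z _
          have : h z ≤ ⟪z, a⟫ := key z a ha
          simp only [hg, Set.mem_setOf_eq]
          rw [real_inner_comm a y, real_inner_comm a z] at *
          simp only [hya]
          linarith
        · exact Filter.univ_mem
      have hdg : DifferentiableAt ℝ g y := hdy.sub ((innerSL ℝ a).differentiableAt)
      have h0 : fderiv ℝ g y = 0 := hmax.fderiv_eq_zero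
      have : fderiv ℝ g y = fderiv ℝ h y - innerSL ℝ a := by
        have h2 : fderiv ℝ (fun z => h z - (innerSL ℝ a) z) y
            = fderiv ℝ h y - fderiv ℝ (fun z => (innerSL ℝ a) z) y :=
          fderiv_sub hdy ((innerSL ℝ a).differentiableAt)
        rw [(innerSL ℝ a).fderiv] at h2
        exact h2
      rw [this] at h0
      exact sub_eq_zero.mp h0
    have e1 := hderiv (η y) (hηconv y) heq
    have e2 := hderiv (ηstar y) (Set.mem_of_mem_of_subset (hargmin y).1 (subset_convexHull ℝ X)) rfl
    have : innerSL ℝ (η y) = innerSL ℝ (ηstar y) := e1 ▸ e2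
    refine ext_inner_right ℝ fun v => ?_
    have := congrArg (fun f => f v) this
    simpa using this
  -- measure-theoretic conclusion
  have hsub : {y : EuclideanSpace ℝ (Fin d) | η y ≠ ηstar y} ⊆
      {y : EuclideanSpace ℝ (Fin d) | ⟪y, ηstar y⟫ < ⟪y, η y⟫} ∪
      {y : EuclideanSpace ℝ (Fin d) | ¬ DifferentiableAt ℝ h y} := by
    intro y hy
    by_cases hdy : DifferentiableAt ℝ h y
    · left
      rcases lt_or_eq_of_le (part1 y) with hlt | heq
      · exact hlt
      · exact absurd (huniq y hdy heq.symm) hy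
    · right; exact hdy
  have hnd : volume {y : EuclideanSpace ℝ (Fin d) | ¬ DifferentiableAt ℝ h y} = 0 := hdiff
  have : volume {y : EuclideanSpace ℝ (Fin d) | η y ≠ ηstar y} = 0 := by
    refine measure_mono_null hsub ?_
    exact le_antisymm ((measure_union_le _ _).trans (by rw [hS0, hnd]; simp)) zero_le
  rw [this] at hD
  exact lt_irrefl _ hD
end

section
/- Let C ⊆ ℝ^d be a nonempty compact convex set. Then the set of vectors y ∈ ℝ^d for which argmin_{x∈C} y^T x is not a singleton (i.e., the linear function x ↦ y^T x has more than one minimizer over C) has Lebesgue measure zero. -/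
open MeasureTheory
open scoped RealInnerProductSpace

/-- For a nonempty compact convex set C ⊆ ℝ^d, the set of objective vectors y
for which the linear function x ↦ yᵀx has more than one minimizer over C (i.e. the argmin is
not a singleton) has Lebesgue measure zero. -/
theorem measure_zero_nonunique_linear_minimizer
    (d : ℕ) (C : Set (EuclideanSpace ℝ (Fin d)))
    (hCne : C.Nonempty) (hCcompact : IsCompact C) (hCconv : Convex ℝ C) :
    volume {y : EuclideanSpace ℝ (Fin d) |
      ¬ ∃! x, x ∈ C ∧ ∀ x' ∈ C, ⟪y, x⟫ ≤ ⟪y, x'⟫} = 0 := by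
  classical
  obtain ⟨R, hR⟩ := hCcompact.isBounded.exists_norm_le
  obtain ⟨x₀, hx₀⟩ := id hCne
  have hR0 : 0 ≤ R := le_trans (norm_nonneg x₀) (hR x₀ hx₀)
  -- a minimizer exists for every y
  have hmin : ∀ y : EuclideanSpace ℝ (Fin d),
      ∃ x, x ∈ C ∧ ∀ x' ∈ C, ⟪y, x⟫ ≤ ⟪y, x'⟫ := by
    intro y
    have hcont : Continuous fun x : EuclideanSpace ℝ (Fin d) => ⟪y, x⟫ :=
      continuous_const.inner continuous_id
    obtain ⟨x, hxC, hx⟩ := hCcompact.exists_isMinOn hCne hcont.continuousOn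
    exact ⟨x, hxC, fun x' hx' => hx hx'⟩
  set m : EuclideanSpace ℝ (Fin d) → EuclideanSpace ℝ (Fin d) :=
    fun y => (hmin y).choose with hm_def
  have hmC : ∀ y, m y ∈ C := fun y => (hmin y).choose_spec.1
  have hm : ∀ y, ∀ x' ∈ C, ⟪y, m y⟫ ≤ ⟪y, x'⟫ := fun y => (hmin y).choose_spec.2
  set f : EuclideanSpace ℝ (Fin d) → ℝ := fun y => ⟪y, m y⟫ with hf_def
  -- the value function is Lipschitz
  have key : ∀ a b : EuclideanSpace ℝ (Fin d), f a - f b ≤ R * ‖a - b‖ := by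
    intro a b
    have h1 : f a ≤ ⟪a, m b⟫ := hm a (m b) (hmC b)
    have h2 : ⟪a, m b⟫ - ⟪b, m b⟫ = ⟪a - b, m b⟫ := by
      rw [inner_sub_left]
    have h3 : ⟪a - b, m b⟫ ≤ ‖a - b‖ * ‖m b‖ := real_inner_le_norm _ _
    have h4 : ‖a - b‖ * ‖m b‖ ≤ ‖a - b‖ * R :=
      mul_le_mul_of_nonneg_left (hR _ (hmC b)) (norm_nonneg _)
    have : f a - f b ≤ ⟪a - b, m b⟫ := by
      have : f b = ⟪b, m b⟫ := rfl
      linarith [h1, h2]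
    nlinarith [norm_nonneg (a - b)]
  have hlip : LipschitzWith (Real.toNNReal R) f := by
    apply LipschitzWith.of_dist_le_mul
    intro a b
    rw [Real.dist_eq, dist_eq_norm, Real.coe_toNNReal _ hR0]
    rw [abs_le]
    constructor
    · have := key b a
      rw [norm_sub_rev] at this
      linarith
    · exact key a b
  -- at differentiability points the minimizer is unique
  have huniq : ∀ y : EuclideanSpace ℝ (Fin d), DifferentiableAt ℝ f y →
      ∃! x, x ∈ C ∧ ∀ x' ∈ C, ⟪y, x⟫ ≤ ⟪y, x'⟫ := by
    intro y hd
    have grad : ∀ x, x ∈ C → (∀ x' ∈ C, ⟪y, x⟫ ≤ ⟪y, x'⟫) →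
        ∀ v : EuclideanSpace ℝ (Fin d), fderiv ℝ f y v = ⟪v, x⟫ := by
      intro x hxC hxmin v
      have hfy : f y = ⟪y, x⟫ :=
        le_antisymm (hm y x hxC) (hxmin (m y) (hmC y))
      -- the curve t ↦ y + t • v
      have hc : HasDerivAt (fun t : ℝ => y + t • v) v 0 := by
        simpa using (((hasDerivAt_id (0:ℝ)).smul_const v).const_add y)
      have hg : HasDerivAt (fun t : ℝ => f (y + t • v)) (fderiv ℝ f y v) 0 := by
        have hd' : HasFDerivAt f (fderiv ℝ f y) ((fun t : ℝ => y + t • v) 0) := by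
          simpa using hd.hasFDerivAt
        have := hd'.comp_hasDerivAt 0 hc
        exact this
      -- h t := f (y + t • v) - t * ⟪v, x⟫ has a global max at 0
      have hh : HasDerivAt (fun t : ℝ => f (y + t • v) - t * ⟪v, x⟫)
          (fderiv ℝ f y v - ⟪v, x⟫) 0 :=
        hg.sub (hasDerivAt_mul_const _)
      have hle : ∀ t : ℝ, f (y + t • v) - t * ⟪v, x⟫ ≤
          f (y + (0:ℝ) • v) - (0:ℝ) * ⟪v, x⟫ := by
        intro t
        have h1 : f (y + t • v) ≤ ⟪y + t • v, x⟫ := hm _ x hxC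
        have h2 : ⟪y + t • v, x⟫ = ⟪y, x⟫ + t * ⟪v, x⟫ := by
          rw [inner_add_left, real_inner_smul_left]
        simp only [zero_smul, add_zero, zero_mul, sub_zero]
        rw [hfy]
        linarith
      have hmax : IsLocalMax (fun t : ℝ => f (y + t • v) - t * ⟪v, x⟫) 0 :=
        Filter.Eventually.of_forall hle
      have := hmax.hasDerivAt_eq_zero hh
      linarith [this]
    refine ⟨m y, ⟨hmC y, hm y⟩, ?_⟩
    rintro x ⟨hxC, hxmin⟩
    apply ext_inner_left ℝ
    intro v
    rw [← grad x hxC hxmin v, grad (m y) (hmC y) (hm y) v]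
  -- conclusion
  have hsub : {y : EuclideanSpace ℝ (Fin d) |
      ¬ ∃! x, x ∈ C ∧ ∀ x' ∈ C, ⟪y, x⟫ ≤ ⟪y, x'⟫} ⊆
      {y | ¬ DifferentiableAt ℝ f y} := by
    intro y hy hd
    exact hy (huniq y hd)
  exact measure_mono_null hsub (ae_iff.mp hlip.ae_differentiableAt)
end

section
/- Let d, n ≥ 1 and let f : ℝ^d → ℝ^d be bounded and measurable. Then F is differentiable everywhere and its gradient satisfies ∇F(μ) = E(μ) + n G(μ) μ − n (μ^T E(μ)) μ for all μ ∈ ℝ^d, where G(μ)μ denotes the matrix-vector product. -/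
set_option maxHeartbeats 4000000
set_option synthInstance.maxHeartbeats 400000

open MeasureTheory Real
open scoped RealInnerProductSpace

private lemma gradE_gauss_int {d : ℕ} {k : ℝ} (hk : 0 < k) (x : EuclideanSpace ℝ (Fin d)) :
    Integrable (fun y : EuclideanSpace ℝ (Fin d) => rexp (-k * ‖y - x‖ ^ 2)) := by
  have h0 : Integrable (fun v : EuclideanSpace ℝ (Fin d) => rexp (-k * ‖v‖ ^ 2)) := by
    have h := (GaussianFourier.integrable_cexp_neg_mul_sq_norm_add (V := EuclideanSpace ℝ (Fin d))
      (b := (k : ℂ)) (by simpa using hk) 0 0).norm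
    refine h.congr (Filter.Eventually.of_forall fun v => ?_)
    simp [Complex.norm_exp]
    left; norm_cast
  exact h0.comp_sub_right x

private lemma gradE_aux_int {W : Type*} [NormedAddCommGroup W] {d : ℕ} {k : ℝ} (hk : 0 < k)
    (x : EuclideanSpace ℝ (Fin d)) {R : ℝ} {h : EuclideanSpace ℝ (Fin d) → W}
    (hm : AEStronglyMeasurable h volume)
    (hb : ∀ y, ‖h y‖ ≤ R * ((1 + ‖y - x‖) * rexp (-k * ‖y - x‖ ^ 2))) :
    Integrable h := by
  have hR : 0 ≤ R := by
    have := (norm_nonneg (h x)).trans (hb x)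
    simpa using this
  refine Integrable.mono'
    (g := fun y => (R * (2 * rexp (1 / (2 * k)))) * rexp (-(k / 2) * ‖y - x‖ ^ 2))
    ((gradE_gauss_int (half_pos hk) x).const_mul _) hm (Filter.Eventually.of_forall fun y => ?_)
  set t := ‖y - x‖ with ht
  have ht0 : 0 ≤ t := norm_nonneg _
  calc ‖h y‖ ≤ R * ((1 + t) * rexp (-k * t ^ 2)) := hb y
    _ ≤ R * ((2 * rexp t) * rexp (-k * t ^ 2)) := by
        have h1 : 1 + t ≤ 2 * rexp t := by
          nlinarith [Real.add_one_le_exp t, Real.exp_pos t]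
        gcongr
    _ = (R * 2) * rexp (t + -k * t ^ 2) := by rw [Real.exp_add]; ring
    _ ≤ (R * 2) * rexp (1 / (2 * k) + -(k / 2) * t ^ 2) := by
        have hle : t + -k * t ^ 2 ≤ 1 / (2 * k) + -(k / 2) * t ^ 2 := by
          rw [← sub_nonneg]
          have heq : 1 / (2 * k) + -(k / 2) * t ^ 2 - (t + -k * t ^ 2)
              = (k * t - 1) ^ 2 / (2 * k) := by field_simp; ring
          rw [heq]; positivity
        exact mul_le_mul_of_nonneg_left (Real.exp_le_exp.2 hle) (by positivity)
    _ = (R * (2 * rexp (1 / (2 * k)))) * rexp (-(k / 2) * ‖y - x‖ ^ 2) := by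
        rw [Real.exp_add]; ring

private lemma gradE_gauss_deriv {d : ℕ} (m c : ℝ) (y x : EuclideanSpace ℝ (Fin d)) :
    HasFDerivAt (fun x : EuclideanSpace ℝ (Fin d) => c * rexp (-m * ‖y - x‖ ^ 2 / 2))
      ((c * rexp (-m * ‖y - x‖ ^ 2 / 2) * m) • innerSL ℝ (y - x)) x := by
  have hfun : (fun x : EuclideanSpace ℝ (Fin d) => c * rexp (-m * ‖y - x‖ ^ 2 / 2))
      = fun x : EuclideanSpace ℝ (Fin d) => c * rexp ((-m / 2) * ‖y - x‖ ^ 2) := by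
    funext z; ring_nf
  rw [hfun]
  have hsub : HasFDerivAt (fun x : EuclideanSpace ℝ (Fin d) => y - x)
      (-(ContinuousLinearMap.id ℝ (EuclideanSpace ℝ (Fin d)))) x := (hasFDerivAt_id x).const_sub y
  have h3 := ((hsub.norm_sq.const_mul (-m / 2)).exp).const_mul c
  refine h3.congr_fderiv ?_
  ext v
  simp [real_inner_comm]
  ring_nf

theorem gradient_of_mu_dot_E
    (d n : ℕ) (hd : 1 ≤ d) (hn : 1 ≤ n)
    (f : EuclideanSpace ℝ (Fin d) → EuclideanSpace ℝ (Fin d))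
    (hfm : Measurable f) (C : ℝ) (hfb : ∀ y, ‖f y‖ ≤ C)
    (g : EuclideanSpace ℝ (Fin d) → EuclideanSpace ℝ (Fin d) → ℝ)
    (hg : ∀ μ y, g μ y =
      ((n : ℝ) / (2 * π)) ^ ((d : ℝ) / 2) * exp (-(n : ℝ) * ‖y - μ‖ ^ 2 / 2))
    (E : EuclideanSpace ℝ (Fin d) → EuclideanSpace ℝ (Fin d))
    (hE : ∀ μ, E μ = ∫ y, g μ y • f y)
    (G : EuclideanSpace ℝ (Fin d) → Matrix (Fin d) (Fin d) ℝ)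
    (hG : ∀ μ i j, G μ i j = ∫ y, y i * f y j * g μ y)
    (F : EuclideanSpace ℝ (Fin d) → ℝ)
    (hF : ∀ μ, F μ = ⟪μ, E μ⟫) :
    (∀ μ, DifferentiableAt ℝ F μ) ∧
    ∀ (μ : EuclideanSpace ℝ (Fin d)) (i : Fin d),
      fderiv ℝ F μ (EuclideanSpace.single i 1) =
        E μ i + (n : ℝ) * (∑ j, G μ i j * μ j) - (n : ℝ) * ⟪μ, E μ⟫ * μ i := by
  have hnR : (1 : ℝ) ≤ (n : ℝ) := by exact_mod_cast hn
  have hn0 : (0 : ℝ) < (n : ℝ) := lt_of_lt_of_le one_pos hnR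
  have hC0 : 0 ≤ C := le_trans (norm_nonneg _) (hfb 0)
  set c : ℝ := ((n : ℝ) / (2 * π)) ^ ((d : ℝ) / 2) with hc
  have hc0 : 0 ≤ c := by
    rw [hc]
    have : 0 ≤ (n : ℝ) / (2 * π) := by positivity
    positivity
  have hgnn : ∀ x y, 0 ≤ g x y := by
    intro x y; rw [hg]; positivity
  have hgform : ∀ x y, g x y = c * rexp (-((n : ℝ) / 2) * ‖y - x‖ ^ 2) := by
    intro x y; rw [hg]; ring_nf
  have hgcont : ∀ x, Continuous fun y => g x y := by
    intro x
    have : (fun y => g x y) = fun y : EuclideanSpace ℝ (Fin d) =>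
        c * rexp (-((n : ℝ) / 2) * ‖y - x‖ ^ 2) := funext fun y => hgform x y
    rw [this]; fun_prop
  -- coordinates are bounded by the norm
  have hcoord : ∀ (v : EuclideanSpace ℝ (Fin d)) (j : Fin d), |v j| ≤ ‖v‖ := by
    intro v j
    have h1 : v j = ⟪EuclideanSpace.single j (1 : ℝ), v⟫ := by
      simp [EuclideanSpace.inner_single_left]
    rw [h1]
    refine le_trans (abs_real_inner_le_norm _ _) ?_
    simp [EuclideanSpace.norm_single]
  have hinnerb : ∀ x y, |(⟪x, f y⟫ : ℝ)| ≤ ‖x‖ * C := fun x y =>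
    le_trans (abs_real_inner_le_norm _ _)
      (mul_le_mul_of_nonneg_left (hfb y) (norm_nonneg x))
  -- measurability helpers
  have hfaem : AEStronglyMeasurable f volume := hfm.aestronglyMeasurable
  have hinnm : ∀ x, AEStronglyMeasurable (fun y => (⟪x, f y⟫ : ℝ)) volume := fun x =>
    (innerSL ℝ x).continuous.comp_aestronglyMeasurable hfaem
  have hgm : ∀ x, AEStronglyMeasurable (fun y => g x y) volume := fun x =>
    (hgcont x).aestronglyMeasurable
  -- the derivative candidate
  set D : EuclideanSpace ℝ (Fin d) → EuclideanSpace ℝ (Fin d) →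
      (EuclideanSpace ℝ (Fin d) →L[ℝ] ℝ) := fun x y =>
    g x y • innerSL ℝ (f y) + (⟪x, f y⟫ : ℝ) • ((g x y * (n : ℝ)) • innerSL ℝ (y - x))
    with hDdef
  have hDeriv : ∀ (y x : EuclideanSpace ℝ (Fin d)),
      HasFDerivAt (fun x => g x y * ⟪x, f y⟫) (D x y) x := by
    intro y x
    have hgx : HasFDerivAt (fun x => g x y) ((g x y * (n : ℝ)) • innerSL ℝ (y - x)) x := by
      have hfun : (fun x => g x y) = fun x : EuclideanSpace ℝ (Fin d) =>
          c * rexp (-(n : ℝ) * ‖y - x‖ ^ 2 / 2) := funext fun z => hg z y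
      rw [hfun, hg]
      exact gradE_gauss_deriv (n : ℝ) c y x
    have hix : HasFDerivAt (fun x : EuclideanSpace ℝ (Fin d) => (⟪x, f y⟫ : ℝ))
        (innerSL ℝ (f y)) x := by
      have hfun : (fun x : EuclideanSpace ℝ (Fin d) => (⟪x, f y⟫ : ℝ))
          = fun x => (innerSL ℝ (f y)) x := by
        funext z; rw [innerSL_apply_apply]; exact real_inner_comm _ _
      rw [hfun]; exact (innerSL ℝ (f y)).hasFDerivAt
    exact hgx.mul hix
  have hDm : ∀ x, AEStronglyMeasurable (fun y => D x y) volume := by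
    intro x
    refine AEStronglyMeasurable.add ?_ ?_
    · exact (hgm x).smul ((innerSL ℝ (E := EuclideanSpace ℝ (Fin d))).continuous.comp_aestronglyMeasurable hfaem)
    · refine (hinnm x).smul (AEStronglyMeasurable.smul ((hgm x).mul_const _) ?_)
      exact ((innerSL ℝ (E := EuclideanSpace ℝ (Fin d))).continuous.comp
        (continuous_id.sub continuous_const)).aestronglyMeasurable
  -- bound for D on unit balls
  have hDbound : ∀ (x₀ x : EuclideanSpace ℝ (Fin d)), ‖x - x₀‖ ≤ 1 → ∀ y,
      ‖D x y‖ ≤ (c * C * (1 + (n : ℝ) * (‖x₀‖ + 1)) * rexp (4 * (n : ℝ))) *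
        ((1 + ‖y - x₀‖) * rexp (-((n : ℝ) / 4) * ‖y - x₀‖ ^ 2)) := by
    intro x₀ x hx y
    set a := ‖y - x₀‖ with ha
    have ha0 : 0 ≤ a := norm_nonneg _
    have hyx : ‖y - x‖ ≤ a + 1 := by
      calc ‖y - x‖ = ‖(y - x₀) + (x₀ - x)‖ := by rw [sub_add_sub_cancel]
        _ ≤ a + ‖x₀ - x‖ := norm_add_le _ _
        _ ≤ a + 1 := by rw [norm_sub_rev]; linarith
    have hxn : ‖x‖ ≤ ‖x₀‖ + 1 := by
      calc ‖x‖ = ‖x₀ + (x - x₀)‖ := by rw [add_sub_cancel]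
        _ ≤ ‖x₀‖ + ‖x - x₀‖ := norm_add_le _ _
        _ ≤ ‖x₀‖ + 1 := by linarith
    have hgb : g x y ≤ c * rexp ((n : ℝ) * a - (n : ℝ) * a ^ 2 / 2) := by
      rw [hg]
      refine mul_le_mul_of_nonneg_left (Real.exp_le_exp.2 ?_) hc0
      have hyx2 : a - 1 ≤ ‖y - x‖ := by
        have h5 : a ≤ ‖y - x‖ + ‖x - x₀‖ := by
          calc a = ‖(y - x) + (x - x₀)‖ := by rw [sub_add_sub_cancel]
            _ ≤ ‖y - x‖ + ‖x - x₀‖ := norm_add_le _ _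
        linarith
      have hkey : a ^ 2 - 2 * a ≤ ‖y - x‖ ^ 2 := by
        rcases le_or_gt a 1 with h1 | h1
        · nlinarith [norm_nonneg (y - x)]
        · nlinarith [hyx2, norm_nonneg (y - x)]
      nlinarith [mul_le_mul_of_nonneg_left hkey hn0.le]
    have hg0 : 0 ≤ g x y := hgnn x y
    have hnD : ‖D x y‖ ≤ g x y * C + (‖x‖ * C) * ((g x y * (n : ℝ)) * ‖y - x‖) := by
      calc ‖D x y‖ ≤ ‖g x y • innerSL ℝ (f y)‖
            + ‖(⟪x, f y⟫ : ℝ) • ((g x y * (n : ℝ)) • innerSL ℝ (y - x))‖ := norm_add_le _ _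
        _ = |g x y| * ‖f y‖ + |(⟪x, f y⟫ : ℝ)| * (|g x y * (n : ℝ)| * ‖y - x‖) := by
            rw [norm_smul (g x y) (innerSL ℝ (f y)),
              norm_smul ((⟪x, f y⟫ : ℝ)) ((g x y * (n : ℝ)) • innerSL ℝ (y - x)),
              norm_smul (g x y * (n : ℝ)) (innerSL ℝ (y - x)),
              innerSL_apply_norm, innerSL_apply_norm, Real.norm_eq_abs, Real.norm_eq_abs,
              Real.norm_eq_abs]
        _ ≤ g x y * C + (‖x‖ * C) * ((g x y * (n : ℝ)) * ‖y - x‖) := by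
            rw [abs_of_nonneg hg0, abs_of_nonneg (by positivity : 0 ≤ g x y * (n : ℝ))]
            gcongr
            · exact hfb y
            · exact hinnerb x y
    set Gb := c * rexp ((n : ℝ) * a - (n : ℝ) * a ^ 2 / 2) with hGb
    have hGb0 : 0 ≤ Gb := by positivity
    have step1 : ‖D x y‖ ≤ Gb * C + ((‖x₀‖ + 1) * C) * ((Gb * (n : ℝ)) * (a + 1)) := by
      refine le_trans hnD (add_le_add (mul_le_mul_of_nonneg_right hgb hC0) ?_)
      refine mul_le_mul (mul_le_mul_of_nonneg_right hxn hC0)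
        (mul_le_mul (mul_le_mul_of_nonneg_right hgb hn0.le) hyx (norm_nonneg _) (by positivity))
        (by positivity) (by positivity)
    have step3 : Gb * C + ((‖x₀‖ + 1) * C) * ((Gb * (n : ℝ)) * (a + 1))
        ≤ (C * (1 + (n : ℝ) * (‖x₀‖ + 1)) * (1 + a)) * Gb := by
      have hM0 : (0:ℝ) ≤ ‖x₀‖ + 1 := by positivity
      nlinarith [mul_nonneg (mul_nonneg hC0 hGb0) ha0,
        mul_nonneg (mul_nonneg (mul_nonneg hn0.le hM0) hC0) hGb0,
        mul_nonneg (mul_nonneg (mul_nonneg (mul_nonneg hn0.le hM0) hC0) hGb0) ha0]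
    have step4 : Gb ≤ c * (rexp (4 * (n : ℝ)) * rexp (-((n : ℝ) / 4) * a ^ 2)) := by
      rw [hGb, ← Real.exp_add]
      refine mul_le_mul_of_nonneg_left (Real.exp_le_exp.2 ?_) hc0
      nlinarith [mul_nonneg hn0.le (sq_nonneg (a - 2)), hn0]
    calc ‖D x y‖ ≤ (C * (1 + (n : ℝ) * (‖x₀‖ + 1)) * (1 + a)) * Gb :=
          le_trans step1 step3
      _ ≤ (C * (1 + (n : ℝ) * (‖x₀‖ + 1)) * (1 + a)) *
          (c * (rexp (4 * (n : ℝ)) * rexp (-((n : ℝ) / 4) * a ^ 2))) := by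
          refine mul_le_mul_of_nonneg_left step4 ?_
          positivity
      _ = (c * C * (1 + (n : ℝ) * (‖x₀‖ + 1)) * rexp (4 * (n : ℝ))) *
          ((1 + a) * rexp (-((n : ℝ) / 4) * a ^ 2)) := by ring
  have hn4 : (0 : ℝ) < (n : ℝ) / 4 := by positivity
  have hn2 : (0 : ℝ) < (n : ℝ) / 2 := by positivity
  have hDint : ∀ x, Integrable (fun y => D x y) volume := fun x =>
    gradE_aux_int hn4 x (hDm x) (hDbound x x (by simp))
  -- integrability of the basic integrands
  have hmono : ∀ (R t e : ℝ), 0 ≤ R → 0 ≤ t → 0 ≤ e → R * e ≤ R * ((1 + t) * e) := by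
    intro R t e hR ht he; nlinarith [mul_nonneg (mul_nonneg hR ht) he]
  have hA : ∀ x, Integrable (fun y => g x y • f y) volume := by
    intro x
    refine gradE_aux_int (R := c * C) hn2 x ((hgm x).smul hfaem)
      (fun y => ?_)
    have h1 : ‖g x y • f y‖ = g x y * ‖f y‖ := by
      rw [norm_smul, Real.norm_eq_abs, abs_of_nonneg (hgnn x y)]
    refine le_trans ?_ (hmono (c * C) ‖y - x‖ _ (by positivity) (norm_nonneg _) (Real.exp_nonneg _))
    rw [h1, hgform]
    calc c * rexp (-((n : ℝ) / 2) * ‖y - x‖ ^ 2) * ‖f y‖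
        ≤ c * rexp (-((n : ℝ) / 2) * ‖y - x‖ ^ 2) * C := by
          refine mul_le_mul_of_nonneg_left (hfb y) (by positivity)
      _ = c * C * rexp (-((n : ℝ) / 2) * ‖y - x‖ ^ 2) := by ring
  have hB : ∀ x, Integrable (fun y => g x y * (⟪x, f y⟫ : ℝ)) volume := by
    intro x
    refine gradE_aux_int (R := c * (‖x‖ * C)) hn2 x ((hgm x).mul (hinnm x)) (fun y => ?_)
    refine le_trans ?_ (hmono _ ‖y - x‖ _ (by positivity) (norm_nonneg _) (Real.exp_nonneg _))
    rw [Real.norm_eq_abs, abs_mul, abs_of_nonneg (hgnn x y), hgform]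
    calc c * rexp (-((n : ℝ) / 2) * ‖y - x‖ ^ 2) * |(⟪x, f y⟫ : ℝ)|
        ≤ c * rexp (-((n : ℝ) / 2) * ‖y - x‖ ^ 2) * (‖x‖ * C) := by
          refine mul_le_mul_of_nonneg_left (hinnerb x y) (by positivity)
      _ = c * (‖x‖ * C) * rexp (-((n : ℝ) / 2) * ‖y - x‖ ^ 2) := by ring
  have hCi : ∀ x (i : Fin d), Integrable (fun y => g x y * f y i) volume := by
    intro x i
    refine gradE_aux_int (R := c * C) hn2 x
      ((hgm x).mul ((EuclideanSpace.proj (𝕜 := ℝ) i).continuous.comp_aestronglyMeasurable hfaem))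
      (fun y => ?_)
    refine le_trans ?_ (hmono _ ‖y - x‖ _ (by positivity) (norm_nonneg _) (Real.exp_nonneg _))
    rw [Real.norm_eq_abs, abs_mul, abs_of_nonneg (hgnn x y), hgform]
    calc c * rexp (-((n : ℝ) / 2) * ‖y - x‖ ^ 2) * |f y i|
        ≤ c * rexp (-((n : ℝ) / 2) * ‖y - x‖ ^ 2) * C := by
          refine mul_le_mul_of_nonneg_left (le_trans (hcoord _ i) (hfb y)) (by positivity)
      _ = c * C * rexp (-((n : ℝ) / 2) * ‖y - x‖ ^ 2) := by ring
  have hDij : ∀ (x : EuclideanSpace ℝ (Fin d)) (i j : Fin d),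
      Integrable (fun y => y i * f y j * g x y) volume := by
    intro x i j
    refine gradE_aux_int (R := c * C * (1 + ‖x‖)) hn2 x ?_ (fun y => ?_)
    · exact (((EuclideanSpace.proj (𝕜 := ℝ) i).continuous.aestronglyMeasurable).mul
        ((EuclideanSpace.proj (𝕜 := ℝ) j).continuous.comp_aestronglyMeasurable hfaem)).mul (hgm x)
    · rw [Real.norm_eq_abs, abs_mul, abs_mul, abs_of_nonneg (hgnn x y), hgform]
      have hyi : |y i| ≤ (1 + ‖x‖) * (1 + ‖y - x‖) := by
        have h1 : |y i| ≤ ‖y‖ := hcoord y i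
        have h2 : ‖y‖ ≤ ‖y - x‖ + ‖x‖ := by
          calc ‖y‖ = ‖(y - x) + x‖ := by rw [sub_add_cancel]
            _ ≤ ‖y - x‖ + ‖x‖ := norm_add_le _ _
        nlinarith [norm_nonneg (y - x), norm_nonneg x, mul_nonneg (norm_nonneg x) (norm_nonneg (y - x))]
      calc |y i| * |f y j| * (c * rexp (-((n : ℝ) / 2) * ‖y - x‖ ^ 2))
          ≤ ((1 + ‖x‖) * (1 + ‖y - x‖)) * C * (c * rexp (-((n : ℝ) / 2) * ‖y - x‖ ^ 2)) := by
            refine mul_le_mul (mul_le_mul hyi (le_trans (hcoord _ j) (hfb y))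
              (abs_nonneg _) (by positivity)) le_rfl (by positivity) (by positivity)
        _ = c * C * (1 + ‖x‖) * ((1 + ‖y - x‖) * rexp (-((n : ℝ) / 2) * ‖y - x‖ ^ 2)) := by ring
  -- the main differentiability statement
  have hmain : ∀ μ₀ : EuclideanSpace ℝ (Fin d), HasFDerivAt F (∫ y, D μ₀ y) μ₀ := by
    intro μ₀
    have hFrep : F = fun x => ∫ y, g x y * ⟪x, f y⟫ := by
      funext x
      rw [hF x, hE x]
      have h2 := (innerSL ℝ x).integral_comp_comm (hA x)
      simp only [innerSL_apply_apply, real_inner_smul_right] at h2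
      exact h2.symm
    rw [hFrep]
    refine hasFDerivAt_integral_of_dominated_of_fderiv_le (Metric.ball_mem_nhds μ₀ one_pos)
      (Filter.Eventually.of_forall fun x => (hgm x).mul (hinnm x))
      (hB μ₀)
      (hDm μ₀)
      (Filter.Eventually.of_forall fun y => fun x hx =>
        hDbound μ₀ x (le_of_lt (mem_ball_iff_norm.1 hx)) y)
      ?_
      (Filter.Eventually.of_forall fun y x _ => hDeriv y x)
    · refine gradE_aux_int (R := c * C * (1 + (n : ℝ) * (‖μ₀‖ + 1)) * rexp (4 * (n : ℝ)))
        hn4 μ₀ (Continuous.aestronglyMeasurable (by fun_prop)) (fun y => ?_)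
      rw [Real.norm_eq_abs, abs_of_nonneg (by positivity)]
  constructor
  · exact fun μ => (hmain μ).differentiableAt
  · intro μ i
    rw [(hmain μ).fderiv, ContinuousLinearMap.integral_apply (hDint μ)]
    -- identify E μ i
    have hEi : E μ i = ∫ y, g μ y * f y i := by
      rw [hE μ]
      have h2 := (EuclideanSpace.proj (𝕜 := ℝ) i).integral_comp_comm (hA μ)
      calc (∫ y, g μ y • f y) i
          = (EuclideanSpace.proj (𝕜 := ℝ) i) (∫ y, g μ y • f y) := rfl
        _ = ∫ y, (EuclideanSpace.proj (𝕜 := ℝ) i) (g μ y • f y) := h2.symm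
        _ = ∫ y, g μ y * f y i := by congr 1
    have hiE : (⟪μ, E μ⟫ : ℝ) = ∫ y, g μ y * (⟪μ, f y⟫ : ℝ) := by
      rw [hE μ]
      have h2 := (innerSL ℝ μ).integral_comp_comm (hA μ)
      simp only [innerSL_apply_apply, real_inner_smul_right] at h2
      exact h2.symm
    -- pointwise formula for D applied to the basis vector
    have happly : ∀ y, D μ y (EuclideanSpace.single i (1 : ℝ)) =
        g μ y * f y i + (n : ℝ) * (∑ j, μ j * (y i * f y j * g μ y))
          - ((n : ℝ) * μ i) * (g μ y * (⟪μ, f y⟫ : ℝ)) := by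
      intro y
      have hD1 : D μ y (EuclideanSpace.single i (1 : ℝ))
          = g μ y * f y i + (⟪μ, f y⟫ : ℝ) * ((g μ y * (n : ℝ)) * (y i - μ i)) := by
        simp only [hDdef, ContinuousLinearMap.add_apply, ContinuousLinearMap.smul_apply,
          innerSL_apply_apply, smul_eq_mul]
        have e1 : (⟪f y, EuclideanSpace.single i (1 : ℝ)⟫ : ℝ) = f y i := by
          rw [EuclideanSpace.inner_single_right]; simp
        have e2 : (⟪y - μ, EuclideanSpace.single i (1 : ℝ)⟫ : ℝ) = y i - μ i := by
          rw [EuclideanSpace.inner_single_right]; simp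
        rw [e1, e2]
      rw [hD1]
      have hinner : (⟪μ, f y⟫ : ℝ) = ∑ j, μ j * f y j := by
        simp [PiLp.inner_apply, RCLike.inner_apply, conj_trivial, mul_comm]
      have hsum : ∑ j, μ j * (y i * f y j * g μ y) = (∑ j, μ j * f y j) * (y i * g μ y) := by
        rw [Finset.sum_mul]
        exact Finset.sum_congr rfl fun j _ => by ring
      rw [hinner, hsum]
      ring
    have hIB : Integrable (fun y => (n : ℝ) * (∑ j, μ j * (y i * f y j * g μ y))) volume := by
      refine Integrable.const_mul ?_ _
      exact integrable_finset_sum _ fun j _ => ((hDij μ i j).const_mul (μ j))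
    have hIC : Integrable (fun y => ((n : ℝ) * μ i) * (g μ y * (⟪μ, f y⟫ : ℝ))) volume :=
      (hB μ).const_mul _
    have hAdd : Integrable (fun y => g μ y * f y i
        + (n : ℝ) * (∑ j, μ j * (y i * f y j * g μ y))) volume := (hCi μ i).add hIB
    calc (∫ y, D μ y (EuclideanSpace.single i (1 : ℝ)))
        = ∫ y, (g μ y * f y i + (n : ℝ) * (∑ j, μ j * (y i * f y j * g μ y))
            - ((n : ℝ) * μ i) * (g μ y * (⟪μ, f y⟫ : ℝ))) := by
          congr 1; funext y; exact happly y
      _ = (∫ y, g μ y * f y i) + (n : ℝ) * (∑ j, μ j * ∫ y, y i * f y j * g μ y)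
            - ((n : ℝ) * μ i) * ∫ y, g μ y * (⟪μ, f y⟫ : ℝ) := by
          rw [integral_sub hAdd hIC, integral_add (hCi μ i) hIB,
            integral_const_mul, integral_const_mul,
            integral_finset_sum _ (fun j _ => ((hDij μ i j).const_mul (μ j)))]
          simp_rw [integral_const_mul]
      _ = E μ i + (n : ℝ) * (∑ j, G μ i j * μ j) - (n : ℝ) * (⟪μ, E μ⟫ : ℝ) * μ i := by
          rw [← hEi, ← hiE]
          have hsg : ∑ j, μ j * ∫ y, y i * f y j * g μ y = ∑ j, G μ i j * μ j :=
            Finset.sum_congr rfl fun j _ => by rw [hG μ i j]; ring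
          rw [hsg]; ring
end

section
/- Let d, n ≥ 1 and let f : ℝ^d → ℝ^d be bounded and measurable. Then F is twice continuously differentiable and its Hessian at the origin satisfies ∇²F(0) = n (G(0)^T + G(0)). -/
open MeasureTheory Matrix Real
open scoped RealInnerProductSpace

set_option maxHeartbeats 1000000
set_option synthInstance.maxHeartbeats 400000

noncomputable section HessianAux

variable {d : ℕ}

def hphi (b c : ℝ) (z : EuclideanSpace ℝ (Fin d)) : ℝ := c * Real.exp (-b * ‖z‖ ^ 2 / 2)

lemma hphi_nonneg {b c : ℝ} (hc : 0 ≤ c) (z : EuclideanSpace ℝ (Fin d)) : 0 ≤ hphi b c z :=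
  mul_nonneg hc (Real.exp_pos _).le

lemma continuous_hphi (b c : ℝ) :
    Continuous (fun z : EuclideanSpace ℝ (Fin d) => hphi b c z) := by
  unfold hphi; fun_prop

def innerB (d : ℕ) :
    EuclideanSpace ℝ (Fin d) →L[ℝ] EuclideanSpace ℝ (Fin d) →L[ℝ] ℝ :=
  (isBoundedBilinearMap_inner (𝕜 := ℝ) (E := EuclideanSpace ℝ (Fin d))).toContinuousLinearMap

@[simp] lemma innerB_apply (w v : EuclideanSpace ℝ (Fin d)) : innerB d w v = ⟪w, v⟫ := rfl

lemma innerB_eq_innerSL (w : EuclideanSpace ℝ (Fin d)) : innerB d w = innerSL ℝ w := by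
  ext v; simp

lemma norm_innerB_apply (w : EuclideanSpace ℝ (Fin d)) : ‖innerB d w‖ = ‖w‖ := by
  rw [innerB_eq_innerSL, innerSL_apply_norm]

lemma norm_innerB_le : ‖innerB d‖ ≤ 1 :=
  ContinuousLinearMap.opNorm_le_bound _ zero_le_one fun w => by
    rw [norm_innerB_apply, one_mul]

def hD1 (b c : ℝ) (f : EuclideanSpace ℝ (Fin d) → EuclideanSpace ℝ (Fin d))
    (μ y : EuclideanSpace ℝ (Fin d)) : EuclideanSpace ℝ (Fin d) →L[ℝ] ℝ :=
  hphi b c (y - μ) • innerB d (f y) +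
    (b * (⟪μ, f y⟫ * hphi b c (y - μ))) • innerB d (y - μ)

def hD2 (b c : ℝ) (f : EuclideanSpace ℝ (Fin d) → EuclideanSpace ℝ (Fin d))
    (μ y : EuclideanSpace ℝ (Fin d)) :
    EuclideanSpace ℝ (Fin d) →L[ℝ] EuclideanSpace ℝ (Fin d) →L[ℝ] ℝ :=
  (b * hphi b c (y - μ)) • (innerB d (y - μ)).smulRight (innerB d (f y)) +
  (b * hphi b c (y - μ)) • (innerB d (f y)).smulRight (innerB d (y - μ)) +
  (b ^ 2 * (⟪μ, f y⟫ * hphi b c (y - μ))) • (innerB d (y - μ)).smulRight (innerB d (y - μ)) -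
  (b * (⟪μ, f y⟫ * hphi b c (y - μ))) • innerB d

lemma hasFDerivAt_hphi_sub (b c : ℝ) (y μ : EuclideanSpace ℝ (Fin d)) :
    HasFDerivAt (fun μ : EuclideanSpace ℝ (Fin d) => hphi b c (y - μ))
      ((b * hphi b c (y - μ)) • innerB d (y - μ)) μ := by
  have h0 : HasFDerivAt (fun μ : EuclideanSpace ℝ (Fin d) => y - μ)
      (-(ContinuousLinearMap.id ℝ (EuclideanSpace ℝ (Fin d)))) μ := by
    exact (hasFDerivAt_id μ).const_sub y
  have h1 := h0.norm_sq
  have h2 := ((h1.const_mul (-b/2)).exp).const_mul c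
  refine (h2.congr_fderiv ?_).congr_of_eventuallyEq (Filter.Eventually.of_forall fun x => ?_)
  · ext v
    simp [hphi, ContinuousLinearMap.smul_apply, two_smul]
    rw [show -(b * ‖y - μ‖ ^ 2) / 2 = -b / 2 * ‖y - μ‖ ^ 2 by ring]
    ring
  · simp only [hphi]
    congr 1
    ring

lemma hasFDerivAt_inner_phi (b c : ℝ)
    (f : EuclideanSpace ℝ (Fin d) → EuclideanSpace ℝ (Fin d))
    (μ y : EuclideanSpace ℝ (Fin d)) :
    HasFDerivAt (fun μ : EuclideanSpace ℝ (Fin d) => ⟪μ, f y⟫ * hphi b c (y - μ))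
      (hD1 b c f μ y) μ := by
  have ha : HasFDerivAt (fun μ : EuclideanSpace ℝ (Fin d) => ⟪μ, f y⟫)
      (innerB d (f y)) μ := by
    have h := (innerB d (f y)).hasFDerivAt (x := μ)
    have : ⇑(innerB d (f y)) = fun μ : EuclideanSpace ℝ (Fin d) => ⟪μ, f y⟫ :=
      funext fun x => by rw [innerB_apply]; exact real_inner_comm _ _
    rwa [this] at h
  have h := ha.mul (hasFDerivAt_hphi_sub b c y μ)
  refine h.congr_fderiv ?_
  ext v
  simp [hD1]
  ring

lemma hasFDerivAt_hD1 (b c : ℝ)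
    (f : EuclideanSpace ℝ (Fin d) → EuclideanSpace ℝ (Fin d))
    (μ y : EuclideanSpace ℝ (Fin d)) :
    HasFDerivAt (fun μ : EuclideanSpace ℝ (Fin d) => hD1 b c f μ y) (hD2 b c f μ y) μ := by
  have hφ := hasFDerivAt_hphi_sub b c y μ
  have hA : HasFDerivAt
      (fun μ : EuclideanSpace ℝ (Fin d) => hphi b c (y - μ) • innerB d (f y))
      (hphi b c (y - μ) •
          (0 : EuclideanSpace ℝ (Fin d) →L[ℝ] (EuclideanSpace ℝ (Fin d) →L[ℝ] ℝ)) +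
        (((b * hphi b c (y - μ)) • innerB d (y - μ)).smulRight (innerB d (f y)))) μ :=
    hφ.smul (hasFDerivAt_const (𝕜 := ℝ) (innerB d (f y)) μ)
  have hs := (hasFDerivAt_inner_phi b c f μ y).const_mul b
  have h0 : HasFDerivAt (fun μ : EuclideanSpace ℝ (Fin d) => y - μ)
      (-(ContinuousLinearMap.id ℝ (EuclideanSpace ℝ (Fin d)))) μ := by
    exact (hasFDerivAt_id μ).const_sub y
  have hB : HasFDerivAt (fun μ : EuclideanSpace ℝ (Fin d) => innerB d (y - μ))
      (-(innerB d)) μ := by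
    have := (innerB d).hasFDerivAt.comp μ h0
    refine this.congr_fderiv ?_
    ext w v
    simp
  have hC : HasFDerivAt
      (fun μ : EuclideanSpace ℝ (Fin d) =>
        (b * (⟪μ, f y⟫ * hphi b c (y - μ))) • innerB d (y - μ))
      ((b * (⟪μ, f y⟫ * hphi b c (y - μ))) • (-(innerB d)) +
        (b • hD1 b c f μ y).smulRight (innerB d (y - μ))) μ := hs.smul hB
  have h := hA.add hC
  refine h.congr_fderiv ?_
  ext w v
  simp [hD1, hD2, real_inner_comm]
  ring

lemma hphi_le {b c : ℝ} (R : ℝ) (hb : 0 ≤ b) (hc : 0 ≤ c)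
    {μ : EuclideanSpace ℝ (Fin d)} (hμ : ‖μ‖ ≤ R) (y : EuclideanSpace ℝ (Fin d)) :
    hphi b c (y - μ) ≤ c * Real.exp (b * R ^ 2 / 2) * Real.exp (-(b / 4) * ‖y‖ ^ 2) := by
  have h1 : ‖y‖ ≤ ‖y - μ‖ + ‖μ‖ := by
    simpa using norm_add_le (y - μ) μ
  have hμ2 : ‖μ‖ ^ 2 ≤ R ^ 2 := by nlinarith [norm_nonneg μ]
  have hy2 : ‖y‖ ^ 2 ≤ 2 * ‖y - μ‖ ^ 2 + 2 * ‖μ‖ ^ 2 := by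
    nlinarith [sq_nonneg (‖y - μ‖ - ‖μ‖), norm_nonneg y, norm_nonneg (y - μ), norm_nonneg μ]
  have key : -b * ‖y - μ‖ ^ 2 / 2 ≤ b * R ^ 2 / 2 + -(b / 4) * ‖y‖ ^ 2 := by
    have k1 := mul_le_mul_of_nonneg_left hy2 hb
    have k2 := mul_le_mul_of_nonneg_left hμ2 hb
    nlinarith [k1, k2]
  calc hphi b c (y - μ) = c * Real.exp (-b * ‖y - μ‖ ^ 2 / 2) := rfl
    _ ≤ c * Real.exp (b * R ^ 2 / 2 + -(b / 4) * ‖y‖ ^ 2) :=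
        mul_le_mul_of_nonneg_left (Real.exp_le_exp.2 key) hc
    _ = _ := by rw [Real.exp_add]; ring

lemma norm_hD1_le {b c C : ℝ} (hb : 0 ≤ b) (hc : 0 ≤ c) (hC : 0 ≤ C)
    {f : EuclideanSpace ℝ (Fin d) → EuclideanSpace ℝ (Fin d)} (hfb : ∀ y, ‖f y‖ ≤ C)
    (μ y : EuclideanSpace ℝ (Fin d)) :
    ‖hD1 b c f μ y‖ ≤ C * hphi b c (y - μ) * (1 + b * ‖μ‖ * (‖y‖ + ‖μ‖)) := by
  have hφ := hphi_nonneg (b := b) hc (y - μ)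
  refine ContinuousLinearMap.opNorm_le_bound _ (by positivity) fun v => ?_
  have hev : hD1 b c f μ y v =
      hphi b c (y - μ) * ⟪f y, v⟫ + b * (⟪μ, f y⟫ * hphi b c (y - μ)) * ⟪y - μ, v⟫ := by
    simp only [hD1, ContinuousLinearMap.add_apply, ContinuousLinearMap.smul_apply,
      innerB_apply, smul_eq_mul]
  rw [hev, Real.norm_eq_abs]
  have i1 : |⟪f y, v⟫| ≤ C * ‖v‖ :=
    (abs_real_inner_le_norm _ _).trans (mul_le_mul_of_nonneg_right (hfb y) (norm_nonneg v))
  have i2 : |⟪μ, f y⟫| ≤ ‖μ‖ * C :=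
    (abs_real_inner_le_norm μ (f y)).trans
      (mul_le_mul_of_nonneg_left (hfb y) (norm_nonneg μ))
  have i3 : |⟪y - μ, v⟫| ≤ (‖y‖ + ‖μ‖) * ‖v‖ :=
    (abs_real_inner_le_norm _ _).trans
      (mul_le_mul_of_nonneg_right (norm_sub_le y μ) (norm_nonneg v))
  have t1 : |hphi b c (y - μ) * ⟪f y, v⟫| ≤ hphi b c (y - μ) * (C * ‖v‖) := by
    rw [abs_mul, abs_of_nonneg hφ]
    exact mul_le_mul_of_nonneg_left i1 hφ
  have t2 : |b * (⟪μ, f y⟫ * hphi b c (y - μ)) * ⟪y - μ, v⟫| ≤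
      b * (‖μ‖ * C * hphi b c (y - μ)) * ((‖y‖ + ‖μ‖) * ‖v‖) := by
    rw [abs_mul, abs_mul, abs_mul, abs_of_nonneg hb, abs_of_nonneg hφ]
    have k1 : b * (|⟪μ, f y⟫| * hphi b c (y - μ)) ≤ b * (‖μ‖ * C * hphi b c (y - μ)) :=
      mul_le_mul_of_nonneg_left (mul_le_mul_of_nonneg_right i2 hφ) hb
    exact mul_le_mul k1 i3 (abs_nonneg _) (by positivity)
  calc |hphi b c (y - μ) * ⟪f y, v⟫ + b * (⟪μ, f y⟫ * hphi b c (y - μ)) * ⟪y - μ, v⟫| ≤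
      |hphi b c (y - μ) * ⟪f y, v⟫| + |b * (⟪μ, f y⟫ * hphi b c (y - μ)) * ⟪y - μ, v⟫| :=
        abs_add_le _ _
    _ ≤ hphi b c (y - μ) * (C * ‖v‖) + b * (‖μ‖ * C * hphi b c (y - μ)) * ((‖y‖ + ‖μ‖) * ‖v‖) :=
        add_le_add t1 t2
    _ = C * hphi b c (y - μ) * (1 + b * ‖μ‖ * (‖y‖ + ‖μ‖)) * ‖v‖ := by ring

lemma norm_hD2_le {b c C : ℝ} (hb : 0 ≤ b) (hc : 0 ≤ c) (hC : 0 ≤ C)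
    {f : EuclideanSpace ℝ (Fin d) → EuclideanSpace ℝ (Fin d)} (hfb : ∀ y, ‖f y‖ ≤ C)
    (μ y : EuclideanSpace ℝ (Fin d)) :
    ‖hD2 b c f μ y‖ ≤ C * hphi b c (y - μ) *
      (2 * b * (‖y‖ + ‖μ‖) + b ^ 2 * ‖μ‖ * (‖y‖ + ‖μ‖) ^ 2 + b * ‖μ‖) := by
  have hφ := hphi_nonneg (b := b) hc (y - μ)
  refine ContinuousLinearMap.opNorm_le_bound _ (by positivity) fun w => ?_
  refine ContinuousLinearMap.opNorm_le_bound _ (by positivity) fun v => ?_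
  have hev : hD2 b c f μ y w v =
      b * hphi b c (y - μ) * ⟪y - μ, w⟫ * ⟪f y, v⟫ +
      b * hphi b c (y - μ) * ⟪f y, w⟫ * ⟪y - μ, v⟫ +
      b ^ 2 * (⟪μ, f y⟫ * hphi b c (y - μ)) * ⟪y - μ, w⟫ * ⟪y - μ, v⟫ -
      b * (⟪μ, f y⟫ * hphi b c (y - μ)) * ⟪w, v⟫ := by
    simp only [hD2, ContinuousLinearMap.sub_apply, ContinuousLinearMap.add_apply,
      ContinuousLinearMap.smul_apply, ContinuousLinearMap.smulRight_apply,
      innerB_apply, smul_eq_mul]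
    ring
  rw [hev, Real.norm_eq_abs]
  have i2 : |⟪μ, f y⟫| ≤ ‖μ‖ * C :=
    (abs_real_inner_le_norm μ (f y)).trans
      (mul_le_mul_of_nonneg_left (hfb y) (norm_nonneg μ))
  have ifw : |⟪f y, w⟫| ≤ C * ‖w‖ :=
    (abs_real_inner_le_norm _ _).trans (mul_le_mul_of_nonneg_right (hfb y) (norm_nonneg w))
  have ifv : |⟪f y, v⟫| ≤ C * ‖v‖ :=
    (abs_real_inner_le_norm _ _).trans (mul_le_mul_of_nonneg_right (hfb y) (norm_nonneg v))
  have isw : |⟪y - μ, w⟫| ≤ (‖y‖ + ‖μ‖) * ‖w‖ :=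
    (abs_real_inner_le_norm _ _).trans
      (mul_le_mul_of_nonneg_right (norm_sub_le y μ) (norm_nonneg w))
  have isv : |⟪y - μ, v⟫| ≤ (‖y‖ + ‖μ‖) * ‖v‖ :=
    (abs_real_inner_le_norm _ _).trans
      (mul_le_mul_of_nonneg_right (norm_sub_le y μ) (norm_nonneg v))
  have iwv : |⟪w, v⟫| ≤ ‖w‖ * ‖v‖ := abs_real_inner_le_norm _ _
  have t1 : |b * hphi b c (y - μ) * ⟪y - μ, w⟫ * ⟪f y, v⟫| ≤
      b * hphi b c (y - μ) * ((‖y‖ + ‖μ‖) * ‖w‖) * (C * ‖v‖) := by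
    rw [abs_mul, abs_mul, abs_mul, abs_of_nonneg hb, abs_of_nonneg hφ]
    exact mul_le_mul (mul_le_mul_of_nonneg_left isw (by positivity)) ifv
      (abs_nonneg _) (by positivity)
  have t2 : |b * hphi b c (y - μ) * ⟪f y, w⟫ * ⟪y - μ, v⟫| ≤
      b * hphi b c (y - μ) * (C * ‖w‖) * ((‖y‖ + ‖μ‖) * ‖v‖) := by
    rw [abs_mul, abs_mul, abs_mul, abs_of_nonneg hb, abs_of_nonneg hφ]
    exact mul_le_mul (mul_le_mul_of_nonneg_left ifw (by positivity)) isv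
      (abs_nonneg _) (by positivity)
  have t3 : |b ^ 2 * (⟪μ, f y⟫ * hphi b c (y - μ)) * ⟪y - μ, w⟫ * ⟪y - μ, v⟫| ≤
      b ^ 2 * (‖μ‖ * C * hphi b c (y - μ)) * ((‖y‖ + ‖μ‖) * ‖w‖) * ((‖y‖ + ‖μ‖) * ‖v‖) := by
    rw [abs_mul, abs_mul, abs_mul, abs_mul, abs_of_nonneg (sq_nonneg b), abs_of_nonneg hφ]
    have k1 : b ^ 2 * (|⟪μ, f y⟫| * hphi b c (y - μ)) ≤
        b ^ 2 * (‖μ‖ * C * hphi b c (y - μ)) :=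
      mul_le_mul_of_nonneg_left (mul_le_mul_of_nonneg_right i2 hφ) (sq_nonneg b)
    exact mul_le_mul (mul_le_mul k1 isw (abs_nonneg _) (by positivity)) isv
      (abs_nonneg _) (by positivity)
  have t4 : |b * (⟪μ, f y⟫ * hphi b c (y - μ)) * ⟪w, v⟫| ≤
      b * (‖μ‖ * C * hphi b c (y - μ)) * (‖w‖ * ‖v‖) := by
    rw [abs_mul, abs_mul, abs_mul, abs_of_nonneg hb, abs_of_nonneg hφ]
    have k1 : b * (|⟪μ, f y⟫| * hphi b c (y - μ)) ≤ b * (‖μ‖ * C * hphi b c (y - μ)) :=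
      mul_le_mul_of_nonneg_left (mul_le_mul_of_nonneg_right i2 hφ) hb
    exact mul_le_mul k1 iwv (abs_nonneg _) (by positivity)
  have tri : ∀ A B Cc D : ℝ, |A + B + Cc - D| ≤ |A| + |B| + |Cc| + |D| := by
    intro A B Cc D
    calc |A + B + Cc - D| ≤ |A + B + Cc| + |D| := abs_sub _ _
      _ ≤ (|A + B| + |Cc|) + |D| := by gcongr; exact abs_add_le _ _
      _ ≤ ((|A| + |B|) + |Cc|) + |D| := by gcongr; exact abs_add_le _ _
  calc |_ + _ + _ - _| ≤ _ := tri _ _ _ _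
    _ ≤ b * hphi b c (y - μ) * ((‖y‖ + ‖μ‖) * ‖w‖) * (C * ‖v‖) +
        b * hphi b c (y - μ) * (C * ‖w‖) * ((‖y‖ + ‖μ‖) * ‖v‖) +
        b ^ 2 * (‖μ‖ * C * hphi b c (y - μ)) * ((‖y‖ + ‖μ‖) * ‖w‖) * ((‖y‖ + ‖μ‖) * ‖v‖) +
        b * (‖μ‖ * C * hphi b c (y - μ)) * (‖w‖ * ‖v‖) :=
      add_le_add (add_le_add (add_le_add t1 t2) t3) t4
    _ = C * hphi b c (y - μ) *
        (2 * b * (‖y‖ + ‖μ‖) + b ^ 2 * ‖μ‖ * (‖y‖ + ‖μ‖) ^ 2 + b * ‖μ‖) * ‖w‖ * ‖v‖ := by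
      ring

lemma integrable_exp_gauss {b : ℝ} (hb : 0 < b) :
    Integrable (fun y : EuclideanSpace ℝ (Fin d) => Real.exp (-b * ‖y‖ ^ 2)) := by
  have h := (GaussianFourier.integrable_cexp_neg_mul_sq_norm_add_of_euclideanSpace (ι := Fin d)
    (b := (b : ℂ)) (by simpa using hb) 0 0).norm
  refine h.congr (Filter.Eventually.of_forall fun y => ?_)
  simp [Complex.norm_exp, ← Complex.ofReal_pow]

lemma integrable_sq_exp_gauss {b : ℝ} (hb : 0 < b) :
    Integrable (fun y : EuclideanSpace ℝ (Fin d) => ‖y‖ ^ 2 * Real.exp (-b * ‖y‖ ^ 2)) := by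
  refine Integrable.mono' ((integrable_exp_gauss (half_pos hb)).const_mul (2 / b))
    ?_ (Filter.Eventually.of_forall fun y => ?_)
  · exact ((continuous_norm.pow 2).mul
      (Real.continuous_exp.comp (by fun_prop))).aestronglyMeasurable
  · set s := ‖y‖ ^ 2 with hs
    have hs0 : 0 ≤ s := sq_nonneg _
    have h1 : b / 2 * s ≤ Real.exp (b / 2 * s) :=
      (le_add_of_nonneg_right zero_le_one).trans (Real.add_one_le_exp _)
    have h2 : s ≤ 2 / b * Real.exp (b / 2 * s) := by
      calc s = 2 / b * (b / 2 * s) := by field_simp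
        _ ≤ 2 / b * Real.exp (b / 2 * s) :=
            mul_le_mul_of_nonneg_left h1 (by positivity)
    rw [Real.norm_eq_abs, abs_of_nonneg (by positivity)]
    calc s * Real.exp (-b * s) ≤ (2 / b * Real.exp (b / 2 * s)) * Real.exp (-b * s) :=
        mul_le_mul_of_nonneg_right h2 (Real.exp_pos _).le
      _ = 2 / b * Real.exp (-(b / 2) * s) := by
          rw [mul_assoc, ← Real.exp_add]
          congr 2
          ring

lemma integrable_norm_exp_gauss {b : ℝ} (hb : 0 < b) :
    Integrable (fun y : EuclideanSpace ℝ (Fin d) => ‖y‖ * Real.exp (-b * ‖y‖ ^ 2)) := by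
  refine Integrable.mono' ((integrable_exp_gauss hb).add (integrable_sq_exp_gauss hb))
    ?_ (Filter.Eventually.of_forall fun y => ?_)
  · exact (continuous_norm.mul (Real.continuous_exp.comp (by fun_prop))).aestronglyMeasurable
  · rw [Real.norm_eq_abs, abs_of_nonneg (by positivity)]
    have h : (0:ℝ) ≤ (1 + ‖y‖ ^ 2 - ‖y‖) * Real.exp (-b * ‖y‖ ^ 2) :=
      mul_nonneg (by nlinarith [sq_nonneg (‖y‖ - 1)]) (Real.exp_pos _).le
    simp only [Pi.add_apply]
    nlinarith [h]

lemma integrable_poly_gauss {b : ℝ} (hb : 0 < b) (a0 a1 a2 : ℝ) :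
    Integrable (fun y : EuclideanSpace ℝ (Fin d) =>
      (a0 + a1 * ‖y‖ + a2 * ‖y‖ ^ 2) * Real.exp (-b * ‖y‖ ^ 2)) := by
  have h := (((integrable_exp_gauss (d := d) hb).const_mul a0).add
    ((integrable_norm_exp_gauss (d := d) hb).const_mul a1)).add
    ((integrable_sq_exp_gauss (d := d) hb).const_mul a2)
  refine h.congr (Filter.Eventually.of_forall fun y => ?_)
  simp only [Pi.add_apply]
  ring

instance instContinuousAddHessT :
    ContinuousAdd (EuclideanSpace ℝ (Fin d) →L[ℝ] EuclideanSpace ℝ (Fin d) →L[ℝ] ℝ) :=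
  ⟨by
    have h := (inferInstance : IsTopologicalAddGroup
      (EuclideanSpace ℝ (Fin d) →L[ℝ] EuclideanSpace ℝ (Fin d) →L[ℝ] ℝ)).toContinuousAdd.continuous_add
    exact h⟩

instance instContinuousSubHessT :
    ContinuousSub (EuclideanSpace ℝ (Fin d) →L[ℝ] EuclideanSpace ℝ (Fin d) →L[ℝ] ℝ) :=
  ⟨by
    have h := (inferInstance : IsTopologicalAddGroup
      (EuclideanSpace ℝ (Fin d) →L[ℝ] EuclideanSpace ℝ (Fin d) →L[ℝ] ℝ)).continuous_neg
    have h2 := (inferInstance : IsTopologicalAddGroup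
      (EuclideanSpace ℝ (Fin d) →L[ℝ] EuclideanSpace ℝ (Fin d) →L[ℝ] ℝ)).toContinuousAdd.continuous_add
    have h3 := h2.comp (continuous_fst.prodMk (h.comp continuous_snd))
    have e : (fun p : (EuclideanSpace ℝ (Fin d) →L[ℝ] EuclideanSpace ℝ (Fin d) →L[ℝ] ℝ) ×
        (EuclideanSpace ℝ (Fin d) →L[ℝ] EuclideanSpace ℝ (Fin d) →L[ℝ] ℝ) => p.1 - p.2) =
        fun p => p.1 + -p.2 := funext fun p => by ext w v; simp [sub_eq_add_neg]
    rw [e]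
    exact h3⟩

end HessianAux


/-- For bounded measurable f, with E(μ) = ∫ f(y) g_μ(y) dy,
G(μ)_{ij} = ∫ yᵢ f(y)_j g_μ(y) dy and F(μ) = μᵀE(μ), the function F is twice continuously
differentiable and its Hessian at the origin satisfies ∇²F(0) = n (G(0)ᵀ + G(0)),
stated entrywise via the second iterated derivative. -/
theorem hessian_at_zero_identity_covariance
    (d n : ℕ) (hd : 1 ≤ d) (hn : 1 ≤ n)
    (f : EuclideanSpace ℝ (Fin d) → EuclideanSpace ℝ (Fin d))
    (hfm : Measurable f) (C : ℝ) (hfb : ∀ y, ‖f y‖ ≤ C)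
    (g : EuclideanSpace ℝ (Fin d) → EuclideanSpace ℝ (Fin d) → ℝ)
    (hg : ∀ μ y, g μ y =
      ((n : ℝ) / (2 * π)) ^ ((d : ℝ) / 2) * exp (-(n : ℝ) * ‖y - μ‖ ^ 2 / 2))
    (E : EuclideanSpace ℝ (Fin d) → EuclideanSpace ℝ (Fin d))
    (hE : ∀ μ, E μ = ∫ y, g μ y • f y)
    (G : EuclideanSpace ℝ (Fin d) → Matrix (Fin d) (Fin d) ℝ)
    (hG : ∀ μ i j, G μ i j = ∫ y, y i * f y j * g μ y)
    (F : EuclideanSpace ℝ (Fin d) → ℝ)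
    (hF : ∀ μ, F μ = ⟪μ, E μ⟫) :
    ContDiff ℝ 2 F ∧
    ∀ i j : Fin d,
      iteratedFDeriv ℝ 2 F 0 ![EuclideanSpace.single i 1, EuclideanSpace.single j 1] =
        (n : ℝ) * ((G 0)ᵀ + G 0) i j := by
  have hb0 : (0:ℝ) < (n:ℝ) := by exact_mod_cast Nat.lt_of_lt_of_le Nat.zero_lt_one hn
  have h4pos : (0:ℝ) < (n:ℝ) / 4 := by positivity
  obtain ⟨c, hc_def⟩ : ∃ c : ℝ, c = ((n : ℝ) / (2 * π)) ^ ((d : ℝ) / 2) := ⟨_, rfl⟩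
  have hc : 0 ≤ c := hc_def ▸ Real.rpow_nonneg (by positivity) _
  have hC : 0 ≤ C := (norm_nonneg (f 0)).trans (hfb 0)
  have hgphi : ∀ μ y, g μ y = hphi (n:ℝ) c (y - μ) := fun μ y => by
    rw [hg μ y, hc_def]; rfl
  have hphicont := continuous_hphi (d := d) (n:ℝ) c
  have hfSM : StronglyMeasurable f := hfm.stronglyMeasurable
  have hm1 : ∀ μ : EuclideanSpace ℝ (Fin d), StronglyMeasurable
      (fun y : EuclideanSpace ℝ (Fin d) => hphi (n:ℝ) c (y - μ)) := fun μ =>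
    (hphicont.comp (continuous_id.sub continuous_const)).stronglyMeasurable
  have hm2 : StronglyMeasurable (fun y : EuclideanSpace ℝ (Fin d) => innerB d (f y)) :=
    (innerB d).continuous.comp_stronglyMeasurable hfSM
  have hm3 : ∀ μ : EuclideanSpace ℝ (Fin d), StronglyMeasurable
      (fun y : EuclideanSpace ℝ (Fin d) => (⟪μ, f y⟫ : ℝ)) := fun μ =>
    (Continuous.inner (continuous_const : Continuous fun _ : EuclideanSpace ℝ (Fin d) => μ)
      continuous_id).comp_stronglyMeasurable hfSM
  have hm4 : ∀ μ : EuclideanSpace ℝ (Fin d), StronglyMeasurable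
      (fun y : EuclideanSpace ℝ (Fin d) => innerB d (y - μ)) := fun μ =>
    ((innerB d).continuous.comp (continuous_id.sub continuous_const)).stronglyMeasurable
  have csr : Continuous fun q : (EuclideanSpace ℝ (Fin d) →L[ℝ] ℝ) ×
      (EuclideanSpace ℝ (Fin d) →L[ℝ] ℝ) => q.1.smulRight q.2 :=
    isBoundedBilinearMap_smulRight.continuous
  -- measurability of the integrands
  have hFmeas : ∀ μ, AEStronglyMeasurable
      (fun y : EuclideanSpace ℝ (Fin d) => ⟪μ, f y⟫ * hphi (n:ℝ) c (y - μ)) volume := fun μ =>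
    ((hm3 μ).mul (hm1 μ)).aestronglyMeasurable
  have hD1meas : ∀ μ, StronglyMeasurable
      (fun y : EuclideanSpace ℝ (Fin d) => hD1 (n:ℝ) c f μ y) := by
    intro μ
    exact ((hm1 μ).smul hm2).add
      ((stronglyMeasurable_const.mul ((hm3 μ).mul (hm1 μ))).smul (hm4 μ))
  have hD2meas : ∀ μ, StronglyMeasurable
      (fun y : EuclideanSpace ℝ (Fin d) => hD2 (n:ℝ) c f μ y) := by
    intro μ
    have s1 : StronglyMeasurable (fun y : EuclideanSpace ℝ (Fin d) =>
        (innerB d (y - μ)).smulRight (innerB d (f y))) :=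
      csr.comp_stronglyMeasurable ((hm4 μ).prodMk hm2)
    have s2 : StronglyMeasurable (fun y : EuclideanSpace ℝ (Fin d) =>
        (innerB d (f y)).smulRight (innerB d (y - μ))) :=
      csr.comp_stronglyMeasurable (hm2.prodMk (hm4 μ))
    have s3 : StronglyMeasurable (fun y : EuclideanSpace ℝ (Fin d) =>
        (innerB d (y - μ)).smulRight (innerB d (y - μ))) :=
      csr.comp_stronglyMeasurable ((hm4 μ).prodMk (hm4 μ))
    exact ((((stronglyMeasurable_const.mul (hm1 μ)).smul s1).add
      ((stronglyMeasurable_const.mul (hm1 μ)).smul s2)).add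
      ((stronglyMeasurable_const.mul ((hm3 μ).mul (hm1 μ))).smul s3)).sub
      ((stronglyMeasurable_const.mul ((hm3 μ).mul (hm1 μ))).smul stronglyMeasurable_const)
  have hD2cont : ∀ y, Continuous (fun μ => hD2 (n:ℝ) c f μ y) := by
    intro y
    have c1 : Continuous fun μ : EuclideanSpace ℝ (Fin d) => hphi (n:ℝ) c (y - μ) :=
      hphicont.comp (continuous_const.sub continuous_id)
    have c3 : Continuous fun μ : EuclideanSpace ℝ (Fin d) => innerB d (y - μ) :=
      (innerB d).continuous.comp (continuous_const.sub continuous_id)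
    have c4 : Continuous fun μ : EuclideanSpace ℝ (Fin d) => (⟪μ, f y⟫ : ℝ) :=
      Continuous.inner continuous_id continuous_const
    refine Continuous.sub
      (G := EuclideanSpace ℝ (Fin d) →L[ℝ] EuclideanSpace ℝ (Fin d) →L[ℝ] ℝ) ?_ ?_
    · exact (((continuous_const.mul c1).smul (csr.comp (c3.prodMk continuous_const))).add
        ((continuous_const.mul c1).smul (csr.comp (continuous_const.prodMk c3)))).add
        ((continuous_const.mul (c4.mul c1)).smul (csr.comp (c3.prodMk c3)))
    · exact (continuous_const.mul (c4.mul c1)).smul continuous_const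
  -- uniform bounds
  have hball : ∀ (μ₀ : EuclideanSpace ℝ (Fin d)), ∀ μ ∈ Metric.ball μ₀ 1, ‖μ‖ ≤ ‖μ₀‖ + 1 := by
    intro μ₀ μ hμ
    have h1 : ‖μ - μ₀‖ < 1 := mem_ball_iff_norm.mp hμ
    have h2 : ‖μ‖ - ‖μ₀‖ ≤ ‖μ - μ₀‖ := norm_sub_norm_le μ μ₀
    linarith
  have hbound1 : ∀ (R : ℝ), 0 ≤ R → ∀ (μ : EuclideanSpace ℝ (Fin d)), ‖μ‖ ≤ R →
      ∀ y, ‖hD1 (n:ℝ) c f μ y‖ ≤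
        (C * (c * Real.exp ((n:ℝ) * R ^ 2 / 2)) * (1 + (n:ℝ) * R * R) +
          C * (c * Real.exp ((n:ℝ) * R ^ 2 / 2)) * ((n:ℝ) * R) * ‖y‖ + 0 * ‖y‖ ^ 2) *
        Real.exp (-((n:ℝ) / 4) * ‖y‖ ^ 2) := by
    intro R hR μ hμR y
    have hφle := hphi_le (b := (n:ℝ)) R hb0.le hc hμR y
    have hφ0 := hphi_nonneg (b := (n:ℝ)) hc (y - μ)
    have k1 : C * hphi (n:ℝ) c (y - μ) ≤
        C * (c * Real.exp ((n:ℝ) * R ^ 2 / 2) * Real.exp (-((n:ℝ) / 4) * ‖y‖ ^ 2)) :=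
      mul_le_mul_of_nonneg_left hφle hC
    have m1 : ‖μ‖ * (‖y‖ + ‖μ‖) ≤ R * (‖y‖ + R) :=
      mul_le_mul hμR (by linarith) (by positivity) hR
    have k2 : 1 + (n:ℝ) * ‖μ‖ * (‖y‖ + ‖μ‖) ≤ 1 + (n:ℝ) * R * (‖y‖ + R) := by
      nlinarith [mul_le_mul_of_nonneg_left m1 hb0.le]
    calc ‖hD1 (n:ℝ) c f μ y‖ ≤
        C * hphi (n:ℝ) c (y - μ) * (1 + (n:ℝ) * ‖μ‖ * (‖y‖ + ‖μ‖)) :=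
          norm_hD1_le hb0.le hc hC hfb μ y
      _ ≤ (C * (c * Real.exp ((n:ℝ) * R ^ 2 / 2) * Real.exp (-((n:ℝ) / 4) * ‖y‖ ^ 2))) *
          (1 + (n:ℝ) * R * (‖y‖ + R)) := by
          refine mul_le_mul k1 k2 (by positivity) ?_
          have : 0 ≤ C * hphi (n:ℝ) c (y - μ) := mul_nonneg hC hφ0
          nlinarith [mul_nonneg (mul_nonneg hC hc) (Real.exp_pos ((n:ℝ) * R ^ 2 / 2)).le,
            (Real.exp_pos (-((n:ℝ) / 4) * ‖y‖ ^ 2)).le,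
            mul_nonneg (mul_nonneg hC hc)
              (mul_nonneg (Real.exp_pos ((n:ℝ) * R ^ 2 / 2)).le
                (Real.exp_pos (-((n:ℝ) / 4) * ‖y‖ ^ 2)).le)]
      _ = _ := by ring
  have hbound2 : ∀ (R : ℝ), 0 ≤ R → ∀ (μ : EuclideanSpace ℝ (Fin d)), ‖μ‖ ≤ R →
      ∀ y, ‖hD2 (n:ℝ) c f μ y‖ ≤
        (C * (c * Real.exp ((n:ℝ) * R ^ 2 / 2)) *
            (2 * (n:ℝ) * R + (n:ℝ) ^ 2 * R * R ^ 2 + (n:ℝ) * R) +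
          C * (c * Real.exp ((n:ℝ) * R ^ 2 / 2)) *
            (2 * (n:ℝ) + 2 * (n:ℝ) ^ 2 * R * R) * ‖y‖ +
          C * (c * Real.exp ((n:ℝ) * R ^ 2 / 2)) * ((n:ℝ) ^ 2 * R) * ‖y‖ ^ 2) *
        Real.exp (-((n:ℝ) / 4) * ‖y‖ ^ 2) := by
    intro R hR μ hμR y
    have hφle := hphi_le (b := (n:ℝ)) R hb0.le hc hμR y
    have hφ0 := hphi_nonneg (b := (n:ℝ)) hc (y - μ)
    have k1 : C * hphi (n:ℝ) c (y - μ) ≤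
        C * (c * Real.exp ((n:ℝ) * R ^ 2 / 2) * Real.exp (-((n:ℝ) / 4) * ‖y‖ ^ 2)) :=
      mul_le_mul_of_nonneg_left hφle hC
    have m1 : ‖y‖ + ‖μ‖ ≤ ‖y‖ + R := by linarith
    have m2 : ‖μ‖ * (‖y‖ + ‖μ‖) ^ 2 ≤ R * (‖y‖ + R) ^ 2 := by
      refine mul_le_mul hμR (by nlinarith [norm_nonneg y, norm_nonneg μ]) (by positivity) hR
    have k2 : 2 * (n:ℝ) * (‖y‖ + ‖μ‖) + (n:ℝ) ^ 2 * ‖μ‖ * (‖y‖ + ‖μ‖) ^ 2 + (n:ℝ) * ‖μ‖ ≤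
        2 * (n:ℝ) * (‖y‖ + R) + (n:ℝ) ^ 2 * R * (‖y‖ + R) ^ 2 + (n:ℝ) * R := by
      have q1 := mul_le_mul_of_nonneg_left m1 (by positivity : (0:ℝ) ≤ 2 * (n:ℝ))
      have q2 := mul_le_mul_of_nonneg_left m2 (sq_nonneg (n:ℝ))
      have q3 := mul_le_mul_of_nonneg_left hμR hb0.le
      nlinarith [q1, q2, q3]
    calc ‖hD2 (n:ℝ) c f μ y‖ ≤
        C * hphi (n:ℝ) c (y - μ) *
          (2 * (n:ℝ) * (‖y‖ + ‖μ‖) + (n:ℝ) ^ 2 * ‖μ‖ * (‖y‖ + ‖μ‖) ^ 2 + (n:ℝ) * ‖μ‖) :=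
          norm_hD2_le hb0.le hc hC hfb μ y
      _ ≤ (C * (c * Real.exp ((n:ℝ) * R ^ 2 / 2) * Real.exp (-((n:ℝ) / 4) * ‖y‖ ^ 2))) *
          (2 * (n:ℝ) * (‖y‖ + R) + (n:ℝ) ^ 2 * R * (‖y‖ + R) ^ 2 + (n:ℝ) * R) := by
          refine mul_le_mul k1 k2 ?_ ?_
          · positivity
          · have : (0:ℝ) ≤ c * Real.exp ((n:ℝ) * R ^ 2 / 2) *
                Real.exp (-((n:ℝ) / 4) * ‖y‖ ^ 2) := by positivity
            nlinarith [mul_nonneg hC this]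
      _ = _ := by ring
  -- the two differentiation steps
  have key1 : ∀ μ₀ : EuclideanSpace ℝ (Fin d),
      HasFDerivAt (fun μ => ∫ y, ⟪μ, f y⟫ * hphi (n:ℝ) c (y - μ))
        (∫ y, hD1 (n:ℝ) c f μ₀ y) μ₀ := by
    intro μ₀
    have hR : (0:ℝ) ≤ ‖μ₀‖ + 1 := by positivity
    apply hasFDerivAt_integral_of_dominated_of_fderiv_le (Metric.ball_mem_nhds μ₀ one_pos)
      (Filter.Eventually.of_forall hFmeas) ?_ (hD1meas μ₀).aestronglyMeasurable
      (Filter.Eventually.of_forall fun y => fun μ hμ =>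
        hbound1 (‖μ₀‖ + 1) hR μ (hball μ₀ μ hμ) y)
      (integrable_poly_gauss h4pos _ _ _)
      (Filter.Eventually.of_forall fun y => fun μ hμ => hasFDerivAt_inner_phi (n:ℝ) c f μ y)
    -- integrability of the base function
    refine Integrable.mono' ((integrable_exp_gauss (d := d) h4pos).const_mul
      ((‖μ₀‖ * C) * (c * Real.exp ((n:ℝ) * ‖μ₀‖ ^ 2 / 2)))) (hFmeas μ₀)
      (Filter.Eventually.of_forall fun y => ?_)
    have hφle := hphi_le (b := (n:ℝ)) ‖μ₀‖ hb0.le hc le_rfl y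
    have hφ0 := hphi_nonneg (b := (n:ℝ)) hc (y - μ₀)
    have hi : |⟪μ₀, f y⟫| ≤ ‖μ₀‖ * C :=
      (abs_real_inner_le_norm μ₀ (f y)).trans
        (mul_le_mul_of_nonneg_left (hfb y) (norm_nonneg μ₀))
    rw [Real.norm_eq_abs, abs_mul, abs_of_nonneg hφ0]
    calc |⟪μ₀, f y⟫| * hphi (n:ℝ) c (y - μ₀) ≤
        (‖μ₀‖ * C) * (c * Real.exp ((n:ℝ) * ‖μ₀‖ ^ 2 / 2) *
          Real.exp (-((n:ℝ) / 4) * ‖y‖ ^ 2)) :=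
          mul_le_mul hi hφle hφ0 (by positivity)
      _ = _ := by ring
  have key2 : ∀ μ₀ : EuclideanSpace ℝ (Fin d),
      HasFDerivAt (fun μ => ∫ y, hD1 (n:ℝ) c f μ y) (∫ y, hD2 (n:ℝ) c f μ₀ y) μ₀ := by
    intro μ₀
    have hR : (0:ℝ) ≤ ‖μ₀‖ + 1 := by positivity
    apply hasFDerivAt_integral_of_dominated_of_fderiv_le (Metric.ball_mem_nhds μ₀ one_pos)
      (Filter.Eventually.of_forall fun μ => (hD1meas μ).aestronglyMeasurable) ?_
      (hD2meas μ₀).aestronglyMeasurable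
      (Filter.Eventually.of_forall fun y => fun μ hμ =>
        hbound2 (‖μ₀‖ + 1) hR μ (hball μ₀ μ hμ) y)
      (integrable_poly_gauss h4pos _ _ _)
      (Filter.Eventually.of_forall fun y => fun μ hμ => hasFDerivAt_hD1 (n:ℝ) c f μ y)
    refine Integrable.mono' (integrable_poly_gauss h4pos _ _ _)
      (hD1meas μ₀).aestronglyMeasurable
      (Filter.Eventually.of_forall fun y =>
        hbound1 (‖μ₀‖ + 1) hR μ₀ (by linarith [norm_nonneg μ₀]) y)
  have hcontF2 : Continuous (fun μ => ∫ y, hD2 (n:ℝ) c f μ y) := by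
    rw [continuous_iff_continuousAt]
    intro μ₀
    have hR : (0:ℝ) ≤ ‖μ₀‖ + 1 := by positivity
    exact continuousAt_of_dominated
      (Filter.Eventually.of_forall fun μ => (hD2meas μ).aestronglyMeasurable)
      (Filter.eventually_of_mem (Metric.ball_mem_nhds μ₀ one_pos) fun μ hμ =>
        ae_of_all _ fun y => hbound2 (‖μ₀‖ + 1) hR μ (hball μ₀ μ hμ) y)
      (integrable_poly_gauss h4pos _ _ _)
      (Filter.Eventually.of_forall fun y => (hD2cont y).continuousAt)
  -- identify F with the parametric integral
  have hint_gf : ∀ μ, Integrable (fun y => g μ y • f y) := by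
    intro μ
    have hmeas : AEStronglyMeasurable (fun y => g μ y • f y) volume := by
      have h1 : (fun y => g μ y • f y) = fun y => hphi (n:ℝ) c (y - μ) • f y :=
        funext fun y => by rw [hgphi]
      rw [h1]
      exact ((hm1 μ).smul hfSM).aestronglyMeasurable
    refine Integrable.mono' ((integrable_exp_gauss (d := d) h4pos).const_mul
      (C * (c * Real.exp ((n:ℝ) * ‖μ‖ ^ 2 / 2)))) hmeas
      (Filter.Eventually.of_forall fun y => ?_)
    have hφle := hphi_le (b := (n:ℝ)) ‖μ‖ hb0.le hc le_rfl y
    have hφ0 := hphi_nonneg (b := (n:ℝ)) hc (y - μ)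
    rw [norm_smul, hgphi, Real.norm_eq_abs, abs_of_nonneg hφ0]
    calc hphi (n:ℝ) c (y - μ) * ‖f y‖ ≤
        (c * Real.exp ((n:ℝ) * ‖μ‖ ^ 2 / 2) * Real.exp (-((n:ℝ) / 4) * ‖y‖ ^ 2)) * C :=
          mul_le_mul hφle (hfb y) (norm_nonneg _) (by positivity)
      _ = _ := by ring
  have hFc : F = fun μ => ∫ y, ⟪μ, f y⟫ * hphi (n:ℝ) c (y - μ) := by
    funext μ
    rw [hF, hE, ← integral_inner (hint_gf μ) μ]
    refine integral_congr_ae (Filter.Eventually.of_forall fun y => ?_)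
    simp only [real_inner_smul_right, hgphi]
    ring
  have hfd : fderiv ℝ F = fun μ => ∫ y, hD1 (n:ℝ) c f μ y := by
    rw [hFc]
    exact funext fun μ => (key1 μ).fderiv
  have hfd1 : fderiv ℝ (fun μ => ∫ y, hD1 (n:ℝ) c f μ y) =
      fun μ => ∫ y, hD2 (n:ℝ) c f μ y := funext fun μ => (key2 μ).fderiv
  have hdiffF : Differentiable ℝ F := by
    rw [hFc]; exact fun μ => (key1 μ).differentiableAt
  constructor
  · rw [show (2 : WithTop ℕ∞) = 1 + 1 by norm_num, contDiff_succ_iff_fderiv]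
    refine ⟨hdiffF, by simp, ?_⟩
    rw [hfd, contDiff_one_iff_fderiv]
    exact ⟨fun μ => (key2 μ).differentiableAt, by rw [hfd1]; exact hcontF2⟩
  · intro i j
    have hR : (0:ℝ) ≤ (1:ℝ) := zero_le_one
    have h0le : ‖(0 : EuclideanSpace ℝ (Fin d))‖ ≤ 1 := by simp
    have hint2 := by
      refine Integrable.mono' (f := fun y => hD2 (n:ℝ) c f 0 y)
        (β := EuclideanSpace ℝ (Fin d) →L[ℝ] EuclideanSpace ℝ (Fin d) →L[ℝ] ℝ)
        (integrable_poly_gauss h4pos _ _ _)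
        (hD2meas 0).aestronglyMeasurable
        (Filter.Eventually.of_forall fun y => hbound2 1 hR 0 h0le y)
    have hint2i : Integrable (fun y => hD2 (n:ℝ) c f 0 y (EuclideanSpace.single i 1)) := by
      refine Integrable.mono' (hint2.norm) ?_ (Filter.Eventually.of_forall fun y => ?_)
      · exact ((ContinuousLinearMap.apply ℝ (EuclideanSpace ℝ (Fin d) →L[ℝ] ℝ)
          (EuclideanSpace.single i 1)).continuous.comp_stronglyMeasurable
          (hD2meas 0)).aestronglyMeasurable
      · calc ‖hD2 (n:ℝ) c f 0 y (EuclideanSpace.single i 1)‖ ≤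
            ‖hD2 (n:ℝ) c f 0 y‖ * ‖EuclideanSpace.single i (1:ℝ)‖ :=
              ContinuousLinearMap.le_opNorm _ _
          _ = ‖hD2 (n:ℝ) c f 0 y‖ := by simp
    have habs : ∀ (k : Fin d) (y : EuclideanSpace ℝ (Fin d)), |y k| ≤ ‖y‖ := by
      intro k y
      have h1 : (⟪y, EuclideanSpace.single k (1:ℝ)⟫ : ℝ) = y k := by
        rw [EuclideanSpace.inner_single_right]; simp
      calc |y k| = |(⟪y, EuclideanSpace.single k (1:ℝ)⟫ : ℝ)| := by rw [h1]
        _ ≤ ‖y‖ * ‖EuclideanSpace.single k (1:ℝ)‖ := abs_real_inner_le_norm _ _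
        _ = ‖y‖ := by simp
    have hphile0 : ∀ y : EuclideanSpace ℝ (Fin d),
        hphi (n:ℝ) c y ≤ c * Real.exp (-((n:ℝ) / 4) * ‖y‖ ^ 2) := by
      intro y
      refine mul_le_mul_of_nonneg_left (Real.exp_le_exp.2 ?_) hc
      nlinarith [sq_nonneg ‖y‖, hb0.le]
    have hint_a : ∀ (k l : Fin d), Integrable
        (fun y : EuclideanSpace ℝ (Fin d) => y k * f y l * hphi (n:ℝ) c y) := by
      intro k l
      have hm : AEStronglyMeasurable
          (fun y : EuclideanSpace ℝ (Fin d) => y k * f y l * hphi (n:ℝ) c y) volume := by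
        have m1 : Measurable fun y : EuclideanSpace ℝ (Fin d) => y k :=
          (EuclideanSpace.proj k).continuous.measurable
        have m2 : Measurable fun y : EuclideanSpace ℝ (Fin d) => f y l :=
          (EuclideanSpace.proj l).continuous.measurable.comp hfm
        have m3 : Measurable fun y : EuclideanSpace ℝ (Fin d) => hphi (n:ℝ) c y :=
          hphicont.measurable
        exact ((m1.mul m2).mul m3).aestronglyMeasurable
      refine Integrable.mono' (((integrable_norm_exp_gauss (d := d) h4pos)).const_mul
        (C * c)) hm (Filter.Eventually.of_forall fun y => ?_)
      have hφ0 := hphi_nonneg (b := (n:ℝ)) hc y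
      have h1 : |f y l| ≤ C := (habs l (f y)).trans (hfb y)
      rw [Real.norm_eq_abs, abs_mul, abs_mul, abs_of_nonneg hφ0]
      calc |y k| * |f y l| * hphi (n:ℝ) c y ≤
          (‖y‖ * C) * (c * Real.exp (-((n:ℝ) / 4) * ‖y‖ ^ 2)) :=
            mul_le_mul (mul_le_mul (habs k y) h1 (abs_nonneg _) (norm_nonneg y))
              (hphile0 y) hφ0 (by positivity)
        _ = C * c * (‖y‖ * Real.exp (-((n:ℝ) / 4) * ‖y‖ ^ 2)) := by ring
    have hpt : ∀ y : EuclideanSpace ℝ (Fin d),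
        hD2 (n:ℝ) c f 0 y (EuclideanSpace.single i 1) (EuclideanSpace.single j 1) =
          (n:ℝ) * (y i * f y j * hphi (n:ℝ) c y) +
            (n:ℝ) * (y j * f y i * hphi (n:ℝ) c y) := by
      intro y
      simp only [hD2, ContinuousLinearMap.sub_apply, ContinuousLinearMap.add_apply,
        ContinuousLinearMap.smul_apply, ContinuousLinearMap.smulRight_apply, innerB_apply,
        smul_eq_mul, sub_zero, inner_zero_left, mul_zero, zero_mul]
      simp only [EuclideanSpace.inner_single_right, conj_trivial, one_mul, mul_one]
      ring
    have hGint : ∀ k l : Fin d, G 0 k l = ∫ y, y k * f y l * hphi (n:ℝ) c y := by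
      intro k l
      rw [hG]
      exact integral_congr_ae (Filter.Eventually.of_forall fun y => by
        simp only [hgphi, sub_zero])
    have hfd1' : fderiv ℝ (fun μ => ∫ y, hD1 (n:ℝ) c f μ y) 0 =
        ∫ y, hD2 (n:ℝ) c f 0 y := (key2 0).fderiv
    rw [iteratedFDeriv_two_apply]
    simp only [Matrix.cons_val_zero, Matrix.cons_val_one, Matrix.head_cons]
    rw [hfd, hfd1']
    rw [ContinuousLinearMap.integral_apply hint2, ContinuousLinearMap.integral_apply hint2i]
    calc (∫ y, hD2 (n:ℝ) c f 0 y (EuclideanSpace.single i 1) (EuclideanSpace.single j 1)) =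
        ∫ y, ((n:ℝ) * (y i * f y j * hphi (n:ℝ) c y) +
          (n:ℝ) * (y j * f y i * hphi (n:ℝ) c y)) :=
          integral_congr_ae (Filter.Eventually.of_forall fun y => hpt y)
      _ = (n:ℝ) * (∫ y, y i * f y j * hphi (n:ℝ) c y) +
          (n:ℝ) * (∫ y, y j * f y i * hphi (n:ℝ) c y) := by
          rw [integral_add ((hint_a i j).const_mul _) ((hint_a j i).const_mul _),
            integral_const_mul, integral_const_mul]
      _ = (n:ℝ) * ((G 0)ᵀ + G 0) i j := by
          simp only [Matrix.add_apply, Matrix.transpose_apply]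
          rw [hGint i j, hGint j i]
          ring
end

section
/- Let d, n ≥ 1 and let f : ℝ^d → ℝ^d be bounded and measurable such that y^T f(y) ≥ 0 for all y ∈ ℝ^d and the set {y ∈ ℝ^d : y^T f(y) > 0} has strictly positive Lebesgue measure. Then the trace of G(0) equals ∫_{ℝ^d} y^T f(y) g_0(y) dy and is strictly positive; consequently, the symmetric matrix n (G(0)^T + G(0)) has a strictly positive eigenvalue, i.e., there exists v ∈ ℝ^d with v^T (G(0)^T + G(0)) v > 0. -/
open MeasureTheory Matrix Real
open scoped RealInnerProductSpace

lemma my_integrable_rexp_neg_mul_sq_norm {d : ℕ} {b : ℝ} (hb : 0 < b) :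
    Integrable (fun v : EuclideanSpace ℝ (Fin d) => rexp (-b * ‖v‖ ^ 2)) := by
  have h := (GaussianFourier.integrable_cexp_neg_mul_sq_norm_add
    (V := EuclideanSpace ℝ (Fin d)) (b := (b : ℂ)) (by simpa using hb) 0
    (0 : EuclideanSpace ℝ (Fin d))).norm
  refine h.congr (Filter.Eventually.of_forall fun v => ?_)
  dsimp only
  rw [Complex.norm_exp]
  norm_num
  left
  rw [← Complex.ofReal_pow, Complex.ofReal_re]

lemma my_mul_exp_le {s t : ℝ} (hs : 0 < s) (ht : 0 ≤ t) :
    t * rexp (-s * t ^ 2) ≤ 1 + 1 / s := by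
  have h1 : rexp (-s * t ^ 2) ≤ 1 := by
    rw [Real.exp_le_one_iff]; nlinarith
  have h2 : s * t ^ 2 * rexp (-(s * t ^ 2)) ≤ 1 := by
    have := Real.add_one_le_exp (s * t ^ 2)
    have hst : 0 ≤ s * t ^ 2 := by positivity
    rw [Real.exp_neg]
    rw [mul_inv_le_iff₀ (Real.exp_pos _), one_mul]
    nlinarith
  have h3 : t ^ 2 * rexp (-s * t ^ 2) ≤ 1 / s := by
    rw [le_div_iff₀ hs]
    calc t ^ 2 * rexp (-s * t ^ 2) * s = s * t ^ 2 * rexp (-(s * t ^ 2)) := by ring_nf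
    _ ≤ 1 := h2
  nlinarith [Real.exp_pos (-s * t ^ 2), sq_nonneg (t - 1)]

lemma my_integrable_aux {d : ℕ} {b : ℝ} (hb : 0 < b)
    (F : EuclideanSpace ℝ (Fin d) → ℝ) (hF : AEStronglyMeasurable F volume)
    (K : ℝ) (hK : 0 ≤ K) (hKb : ∀ y, |F y| ≤ K * ‖y‖) :
    Integrable (fun y => F y * rexp (-b * ‖y‖ ^ 2)) := by
  have hmeas : AEStronglyMeasurable (fun y : EuclideanSpace ℝ (Fin d) =>
      F y * rexp (-b * ‖y‖ ^ 2)) volume := by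
    exact hF.mul ((Real.continuous_exp.comp (by continuity)).aestronglyMeasurable)
  have hgi : Integrable (fun y : EuclideanSpace ℝ (Fin d) =>
      K * (1 + 1 / (b / 2)) * rexp (-(b / 2) * ‖y‖ ^ 2)) :=
    (my_integrable_rexp_neg_mul_sq_norm (by linarith)).const_mul _
  refine hgi.mono hmeas (Filter.Eventually.of_forall fun y => ?_)
  have hb2 : (0 : ℝ) < b / 2 := by linarith
  have key : ‖y‖ * rexp (-(b / 2) * ‖y‖ ^ 2) ≤ 1 + 1 / (b / 2) :=
    my_mul_exp_le hb2 (norm_nonneg y)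
  have hsplit : rexp (-b * ‖y‖ ^ 2) =
      rexp (-(b / 2) * ‖y‖ ^ 2) * rexp (-(b / 2) * ‖y‖ ^ 2) := by
    rw [← Real.exp_add]; ring_nf
  rw [Real.norm_eq_abs, Real.norm_eq_abs, abs_mul, Real.abs_exp, hsplit]
  have hexp : (0 : ℝ) < rexp (-(b / 2) * ‖y‖ ^ 2) := Real.exp_pos _
  have h1 : |F y| * (rexp (-(b / 2) * ‖y‖ ^ 2) * rexp (-(b / 2) * ‖y‖ ^ 2)) ≤
      K * ‖y‖ * rexp (-(b / 2) * ‖y‖ ^ 2) * rexp (-(b / 2) * ‖y‖ ^ 2) := by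
    nlinarith [hKb y, abs_nonneg (F y), norm_nonneg y]
  calc |F y| * (rexp (-(b / 2) * ‖y‖ ^ 2) * rexp (-(b / 2) * ‖y‖ ^ 2))
      ≤ K * ‖y‖ * rexp (-(b / 2) * ‖y‖ ^ 2) * rexp (-(b / 2) * ‖y‖ ^ 2) := h1
    _ = K * (‖y‖ * rexp (-(b / 2) * ‖y‖ ^ 2)) * rexp (-(b / 2) * ‖y‖ ^ 2) := by ring
    _ ≤ K * (1 + 1 / (b / 2)) * rexp (-(b / 2) * ‖y‖ ^ 2) :=
        mul_le_mul_of_nonneg_right (mul_le_mul_of_nonneg_left key hK) hexp.le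
    _ ≤ |K * (1 + 1 / (b / 2)) * rexp (-(b / 2) * ‖y‖ ^ 2)| := le_abs_self _

lemma my_abs_apply_le_norm {d : ℕ} (y : EuclideanSpace ℝ (Fin d)) (i : Fin d) :
    |y i| ≤ ‖y‖ := by
  rw [EuclideanSpace.norm_eq, ← Real.sqrt_sq_eq_abs]
  apply Real.sqrt_le_sqrt
  have : (y i) ^ 2 = ‖y i‖ ^ 2 := by rw [Real.norm_eq_abs, sq_abs]
  rw [this]
  exact Finset.single_le_sum (f := fun j => ‖y j‖ ^ 2)
    (fun j _ => sq_nonneg _) (Finset.mem_univ i)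

/-- For bounded measurable f with yᵀf(y) ≥ 0 everywhere and yᵀf(y) > 0 on a set
of positive Lebesgue measure, the trace of G(0) equals ∫ yᵀf(y) g₀(y) dy and is strictly
positive; consequently the symmetric matrix n(G(0)ᵀ + G(0)) has a strictly positive
eigenvalue, i.e. there is v with vᵀ(G(0)ᵀ + G(0))v > 0. -/
theorem trace_G_pos_and_positive_curvature
    (d n : ℕ) (hd : 1 ≤ d) (hn : 1 ≤ n)
    (f : EuclideanSpace ℝ (Fin d) → EuclideanSpace ℝ (Fin d))
    (hfm : Measurable f) (C : ℝ) (hfb : ∀ y, ‖f y‖ ≤ C)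
    (g : EuclideanSpace ℝ (Fin d) → EuclideanSpace ℝ (Fin d) → ℝ)
    (hg : ∀ μ y, g μ y =
      ((n : ℝ) / (2 * π)) ^ ((d : ℝ) / 2) * exp (-(n : ℝ) * ‖y - μ‖ ^ 2 / 2))
    (G : EuclideanSpace ℝ (Fin d) → Matrix (Fin d) (Fin d) ℝ)
    (hG : ∀ μ i j, G μ i j = ∫ y, y i * f y j * g μ y)
    (hpos : ∀ y : EuclideanSpace ℝ (Fin d), 0 ≤ ⟪y, f y⟫)
    (hposset : 0 < volume {y : EuclideanSpace ℝ (Fin d) | 0 < ⟪y, f y⟫}) :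
    (G 0).trace = (∫ y, ⟪y, f y⟫ * g 0 y) ∧ 0 < (G 0).trace ∧
    ∃ v : Fin d → ℝ, 0 < v ⬝ᵥ ((G 0)ᵀ + G 0).mulVec v := by
  have hC : 0 ≤ C := le_trans (norm_nonneg _) (hfb 0)
  set c : ℝ := ((n : ℝ) / (2 * π)) ^ ((d : ℝ) / 2) with hc
  have hcpos : 0 < c := by
    apply Real.rpow_pos_of_pos
    have : (0:ℝ) < (n:ℝ) := by exact_mod_cast hn
    positivity
  set b : ℝ := (n : ℝ) / 2 with hb
  have hbpos : 0 < b := by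
    have : (0:ℝ) < (n:ℝ) := by exact_mod_cast hn
    rw [hb]; linarith
  have hg0 : ∀ y, g 0 y = c * rexp (-b * ‖y‖ ^ 2) := by
    intro y
    rw [hg 0 y, sub_zero]
    congr 1
    ring_nf
    rw [hb]; ring_nf
  -- measurability pieces
  have hyi : ∀ i : Fin d, Measurable fun y : EuclideanSpace ℝ (Fin d) => y i := by
    intro i
    exact (measurable_pi_apply i).comp (MeasurableEquiv.toLp 2 (Fin d → ℝ)).symm.measurable
  have hfyi : ∀ i : Fin d, Measurable fun y : EuclideanSpace ℝ (Fin d) => f y i := by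
    intro i
    exact (hyi i).comp hfm
  -- integrability of each diagonal term
  have hint : ∀ i : Fin d,
      Integrable (fun y : EuclideanSpace ℝ (Fin d) => y i * f y i * g 0 y) := by
    intro i
    have : Integrable (fun y : EuclideanSpace ℝ (Fin d) =>
        (y i * f y i * c) * rexp (-b * ‖y‖ ^ 2)) := by
      refine my_integrable_aux hbpos _
        ((((hyi i).mul (hfyi i)).mul measurable_const).aestronglyMeasurable)
        (C * c) (by positivity) ?_
      intro y
      have h1 : |y i| ≤ ‖y‖ := my_abs_apply_le_norm y i
      have h2 : |f y i| ≤ C := (my_abs_apply_le_norm (f y) i).trans (hfb y)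
      calc |y i * f y i * c| = |y i| * |f y i| * c := by
              rw [abs_mul, abs_mul, abs_of_pos hcpos]
        _ ≤ ‖y‖ * C * c := by
              apply mul_le_mul_of_nonneg_right _ hcpos.le
              exact mul_le_mul h1 h2 (abs_nonneg _) (norm_nonneg _)
        _ = C * c * ‖y‖ := by ring
    refine this.congr (Filter.Eventually.of_forall fun y => ?_)
    dsimp only
    rw [hg0 y]; ring
  -- inner product as sum
  have hinner : ∀ y : EuclideanSpace ℝ (Fin d), ⟪y, f y⟫ = ∑ i, y i * f y i := by
    intro y
    rw [PiLp.inner_apply]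
    simp [RCLike.inner_apply, mul_comm]
  -- trace = integral
  have htrace : (G 0).trace = ∫ y, ⟪y, f y⟫ * g 0 y := by
    rw [Matrix.trace]
    have : ∀ i : Fin d, (G 0).diag i = ∫ y, y i * f y i * g 0 y := fun i => hG 0 i i
    rw [Finset.sum_congr rfl fun i _ => this i, ← integral_finset_sum _ fun i _ => hint i]
    congr 1
    ext y
    rw [hinner y, Finset.sum_mul]
  have hInt : Integrable (fun y : EuclideanSpace ℝ (Fin d) => ⟪y, f y⟫ * g 0 y) := by
    have := integrable_finset_sum (μ := volume) Finset.univ fun i (_ : i ∈ Finset.univ) => hint i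
    refine this.congr (Filter.Eventually.of_forall fun y => ?_)
    dsimp only
    rw [hinner y, Finset.sum_mul]
  -- positivity
  have hpos2 : 0 < ∫ y, ⟪y, f y⟫ * g 0 y := by
    rw [integral_pos_iff_support_of_nonneg _ hInt]
    · refine lt_of_lt_of_le hposset (measure_mono ?_)
      intro y hy
      simp only [Set.mem_setOf_eq] at hy
      simp only [Function.mem_support]
      have : 0 < g 0 y := by rw [hg0 y]; positivity
      positivity
    · intro y
      have : 0 < g 0 y := by rw [hg0 y]; positivity
      exact mul_nonneg (hpos y) this.le
  refine ⟨htrace, htrace ▸ hpos2, ?_⟩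
  -- diagonal of Gᵀ + G
  have htsum : 0 < ∑ i, ((G 0)ᵀ + G 0) i i := by
    have : ∑ i, ((G 0)ᵀ + G 0) i i = 2 * (G 0).trace := by
      simp [Matrix.trace, Matrix.diag, Matrix.transpose_apply, Finset.sum_add_distrib]
      ring
    rw [this]
    have := htrace ▸ hpos2
    linarith
  obtain ⟨i, _, hi⟩ := Finset.exists_lt_of_sum_lt (f := fun _ : Fin d => (0:ℝ))
    (g := fun i => ((G 0)ᵀ + G 0) i i) (by simpa using htsum)
  refine ⟨Pi.single i 1, ?_⟩
  have : (Pi.single i 1 : Fin d → ℝ) ⬝ᵥ ((G 0)ᵀ + G 0).mulVec (Pi.single i 1) =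
      ((G 0)ᵀ + G 0) i i := by
    simp [Matrix.mulVec, dotProduct, Pi.single_apply]
  rw [this]
  exact hi
end

section
/- Let A ∈ ℝ^{d×d} be a real matrix with trace(A) > 0 and let P ∈ ℝ^{d×d} be a real symmetric positive definite matrix. Then the symmetric matrix P A + A^T P has a strictly positive eigenvalue; equivalently, there exists a vector v with v^T (P A + A^T P) v > 0. -/
open Matrix

/-- If A has positive trace and P is symmetric positive definite, then the
symmetric matrix PA + AᵀP has a strictly positive eigenvalue; equivalently there is a vector
v with vᵀ(PA + AᵀP)v > 0. -/
theorem posTrace_posDef_positive_curvature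
    (d : ℕ) (A P : Matrix (Fin d) (Fin d) ℝ)
    (htr : 0 < A.trace) (hP : P.PosDef) :
    ∃ v : Fin d → ℝ, 0 < v ⬝ᵥ (P * A + Aᵀ * P).mulVec v := by
  set M : Matrix (Fin d) (Fin d) ℝ := P * A + Aᵀ * P with hM
  have hPinv : P⁻¹.PosDef := hP.inv
  obtain ⟨Q, hQQ, hQsym⟩ : ∃ Q : Matrix (Fin d) (Fin d) ℝ, Q * Q = P⁻¹ ∧ Qᵀ = Q := by
    open scoped MatrixOrder in
    exact ⟨CFC.sqrt P⁻¹, CFC.sqrt_mul_sqrt_self _ hPinv.posSemidef.nonneg,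
      (CFC.sqrt_nonneg _).posSemidef.1⟩
  have hPPinv : P * P⁻¹ = 1 := Matrix.mul_nonsing_inv P (isUnit_iff_ne_zero.mpr hP.det_pos.ne')
  -- trace of Q M Q is 2 trace A
  have hdet : IsUnit P.det := isUnit_iff_ne_zero.mpr hP.det_pos.ne'
  have h1 : (P⁻¹ * (P * A)).trace = A.trace := by
    rw [← Matrix.mul_assoc, Matrix.nonsing_inv_mul P hdet, Matrix.one_mul]
  have h2 : (P⁻¹ * (Aᵀ * P)).trace = A.trace := by
    rw [Matrix.trace_mul_comm, Matrix.mul_assoc, hPPinv, Matrix.mul_one,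
      Matrix.trace_transpose]
  have htrace : (Q * M * Q).trace = 2 * A.trace := by
    rw [Matrix.trace_mul_cycle, hQQ, hM, Matrix.mul_add, Matrix.trace_add, h1, h2]
    ring
  have htrpos : 0 < (Q * M * Q).trace := by rw [htrace]; linarith
  -- some diagonal entry is positive
  have : ∃ i, 0 < (Q * M * Q) i i := by
    by_contra h
    push_neg at h
    have : (Q * M * Q).trace ≤ 0 := Finset.sum_nonpos fun i _ => h i
    linarith
  obtain ⟨i, hi⟩ := this
  refine ⟨Q.mulVec (Pi.single i 1), ?_⟩
  have hsym : ∀ a b, Q a b = Q b a := fun a b =>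
    (Matrix.transpose_apply Q b a).symm.trans (congrFun (congrFun hQsym b) a)
  have key : Q.mulVec (Pi.single i 1) ⬝ᵥ M.mulVec (Q.mulVec (Pi.single i 1))
      = (Q * M * Q) i i := by
    simp only [Matrix.mulVec, dotProduct, Matrix.mul_apply, Pi.single_apply,
      mul_ite, mul_one, mul_zero, Finset.sum_ite_eq', Finset.mem_univ, if_true,
      Finset.sum_mul, Finset.mul_sum]
    rw [Finset.sum_comm]
    refine Finset.sum_congr rfl fun j _ => Finset.sum_congr rfl fun k _ => ?_
    rw [hsym k i]; ring
  rw [key]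
  exact hi
end

section
/- Let X = {x ∈ ℝ^d : −u_i ≤ x_i ≤ u_i, i = 1,…,d} with each u_i > 0, and let s ∈ (0, 1]. Let I^+ and I^− be disjoint subsets of {1,…,d} and suppose y ∈ ℝ^d satisfies: y_i ≥ u_i/s for i ∈ I^+, y_i ≤ −u_i/s for i ∈ I^−, and −u_i/s ≤ y_i ≤ u_i/s for i ∉ I^+ ∪ I^−. Then both Proj_X(s y) and Proj_X(y) lie in the face F = {x ∈ X : x_i = u_i for i ∈ I^+, x_i = −u_i for i ∈ I^−} of X, and consequently ⟨ s y − Proj_X(s y), Proj_X(y) − Proj_X(s y) ⟩ = 0. -/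
open scoped RealInnerProductSpace

lemma clamp1d {a z t : ℝ} (ht1 : -a ≤ t) (ht2 : t ≤ a) :
    (z - max (-a) (min a z))^2 ≤ (z - t)^2 ∧
      ((z - max (-a) (min a z))^2 = (z - t)^2 → t = max (-a) (min a z)) := by
  have haa : -a ≤ a := ht1.trans ht2
  rcases le_total a z with h | h
  · rw [min_eq_left h, max_eq_right haa]
    constructor <;> intros <;> nlinarith
  rcases le_total z (-a) with h2 | h2
  · rw [min_eq_right (h2.trans haa), max_eq_left h2]
    constructor <;> intros <;> nlinarith
  · rw [min_eq_right h, max_eq_right h2]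
    constructor <;> intros <;> nlinarith

lemma proj_eq_clamp (d : ℕ) (u : Fin d → ℝ) (hu : ∀ i, 0 < u i)
    (X : Set (EuclideanSpace ℝ (Fin d)))
    (hX : X = {x | ∀ i, -u i ≤ x i ∧ x i ≤ u i})
    (P : EuclideanSpace ℝ (Fin d) → EuclideanSpace ℝ (Fin d))
    (hP : ∀ y, P y ∈ X ∧ ∀ q ∈ X, ‖y - P y‖ ≤ ‖y - q‖)
    (z : EuclideanSpace ℝ (Fin d)) (i : Fin d) :
    P z i = max (-u i) (min (u i) (z i)) := by
  set c : EuclideanSpace ℝ (Fin d) := WithLp.toLp 2 (fun j => max (-u j) (min (u j) (z j))) with hc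
  have hcX : c ∈ X := by
    rw [hX]
    intro j
    refine ⟨le_max_left _ _, max_le (by linarith [hu j]) (min_le_left _ _)⟩
  have hPz : ∀ j, -u j ≤ P z j ∧ P z j ≤ u j := by
    have := (hP z).1; rw [hX] at this; exact this
  have normsq : ∀ w : EuclideanSpace ℝ (Fin d), ‖w‖^2 = ∑ j, (w j)^2 := by
    intro w
    rw [EuclideanSpace.norm_eq, Real.sq_sqrt (Finset.sum_nonneg fun j _ => sq_nonneg _)]
    simp [Real.norm_eq_abs, sq_abs]
  have hle : ∑ j, (z j - P z j)^2 ≤ ∑ j, (z j - c j)^2 := by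
    have h := pow_le_pow_left₀ (norm_nonneg (z - P z)) ((hP z).2 c hcX) 2
    rw [normsq, normsq] at h
    simpa using h
  have termle : ∀ j ∈ Finset.univ, (z j - c j)^2 ≤ (z j - P z j)^2 :=
    fun j _ => (clamp1d (hPz j).1 (hPz j).2).1
  have hsum : ∑ j, (z j - c j)^2 = ∑ j, (z j - P z j)^2 :=
    le_antisymm (Finset.sum_le_sum termle) hle
  have heq := (Finset.sum_eq_sum_iff_of_le termle).mp hsum i (Finset.mem_univ i)
  exact (clamp1d (hPz i).1 (hPz i).2).2 heq


/-- If y lies in the region (1/s)F + N_F determined by disjoint index sets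
I⁺, I⁻ (with s ∈ (0,1]), then both Proj_X(s y) and Proj_X(y) lie in the face F of the box X,
and consequently ⟨s y − Proj_X(s y), Proj_X(y) − Proj_X(s y)⟩ = 0. -/
theorem box_projection_face_orthogonality
    (d : ℕ) (u : Fin d → ℝ) (hu : ∀ i, 0 < u i)
    (s : ℝ) (hs0 : 0 < s) (hs1 : s ≤ 1)
    (X : Set (EuclideanSpace ℝ (Fin d)))
    (hX : X = {x | ∀ i, -u i ≤ x i ∧ x i ≤ u i})
    -- P is the Euclidean nearest-point projection onto X
    (P : EuclideanSpace ℝ (Fin d) → EuclideanSpace ℝ (Fin d))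
    (hP : ∀ y, P y ∈ X ∧ ∀ q ∈ X, ‖y - P y‖ ≤ ‖y - q‖)
    (Ip Im : Finset (Fin d)) (hdisj : Disjoint Ip Im)
    (F : Set (EuclideanSpace ℝ (Fin d)))
    (hF : F = {x ∈ X | (∀ i ∈ Ip, x i = u i) ∧ ∀ i ∈ Im, x i = -u i})
    (y : EuclideanSpace ℝ (Fin d))
    (hyp : ∀ i ∈ Ip, u i / s ≤ y i)
    (hym : ∀ i ∈ Im, y i ≤ -u i / s)
    (hy0 : ∀ i, i ∉ Ip → i ∉ Im → -u i / s ≤ y i ∧ y i ≤ u i / s) :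
    P (s • y) ∈ F ∧ P y ∈ F ∧ ⟪s • y - P (s • y), P y - P (s • y)⟫ = 0 := by

  have hq : ∀ j, P y j = max (-u j) (min (u j) (y j)) :=
    proj_eq_clamp d u hu X hX P hP y
  have hsy : ∀ j, (s • y) j = s * y j := fun j => rfl
  have hp : ∀ j, P (s • y) j = max (-u j) (min (u j) (s * y j)) := by
    intro j
    rw [← hsy j]
    exact proj_eq_clamp d u hu X hX P hP (s • y) j
  have hpIp : ∀ j ∈ Ip, P (s • y) j = u j := by
    intro j hj
    have h1 : u j ≤ s * y j := by
      have := (div_le_iff₀ hs0).mp (hyp j hj); nlinarith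
    rw [hp j, min_eq_left h1, max_eq_right (by linarith [hu j])]
  have hqIp : ∀ j ∈ Ip, P y j = u j := by
    intro j hj
    have h1 : u j ≤ y j := by
      have := (div_le_iff₀ hs0).mp (hyp j hj); nlinarith [hu j]
    rw [hq j, min_eq_left h1, max_eq_right (by linarith [hu j])]
  have hpIm : ∀ j ∈ Im, P (s • y) j = -u j := by
    intro j hj
    have h1 : s * y j ≤ -u j := by
      have := (le_div_iff₀ hs0).mp (hym j hj); nlinarith
    rw [hp j, min_eq_right (by linarith [hu j]), max_eq_left h1]
  have hqIm : ∀ j ∈ Im, P y j = -u j := by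
    intro j hj
    have h1 : y j ≤ -u j := by
      have := (le_div_iff₀ hs0).mp (hym j hj); nlinarith [hu j]
    rw [hq j, min_eq_right (by linarith [hu j]), max_eq_left h1]
  have hp0 : ∀ j, j ∉ Ip → j ∉ Im → P (s • y) j = s * y j := by
    intro j h1 h2
    obtain ⟨ha, hb⟩ := hy0 j h1 h2
    have ha' : -u j ≤ s * y j := by
      have := (div_le_iff₀ hs0).mp ha; nlinarith
    have hb' : s * y j ≤ u j := by
      have := (le_div_iff₀ hs0).mp hb; nlinarith
    rw [hp j, min_eq_right hb', max_eq_right ha']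
  refine ⟨?_, ?_, ?_⟩
  · rw [hF]; exact ⟨(hP _).1, hpIp, hpIm⟩
  · rw [hF]; exact ⟨(hP _).1, hqIp, hqIm⟩
  · rw [PiLp.inner_apply]
    refine Finset.sum_eq_zero fun j _ => ?_
    simp only [PiLp.sub_apply, RCLike.inner_apply, conj_trivial]
    by_cases h1 : j ∈ Ip
    · rw [hpIp j h1, hqIp j h1]; ring
    by_cases h2 : j ∈ Im
    · rw [hpIm j h2, hqIm j h2]; ring
    · rw [hp0 j h1 h2, hsy j]; ring
end
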